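/- arXiv:2402.07185 — 7 statements merged into one kernel-verified Lean document; each statement's English description precedes it below -/
import Mathlib

section
/- Let γ ∈ (0,1) and let a : [0,1] → ℝ be a continuous function. Then there exist δ ∈ (0,1/2] and a strictly positive function f : [0,δ] → (0,∞) with f ∈ C¹([0,δ]) such that f(0) = γ and f'(y) = a₀(y) + (a₁(y)/(1−y))·f(y) + (a(y)/(1−y))·f(y)² for all y ∈ (0,δ). -/
open Set Real

/-- `a₀(y) = γ(1+γ)/y`. -/
noncomputable def a0 (γ y : ℝ) : ℝ := γ * (1 + γ) / y

/-- `a₁(y) = ((2γ+1)y − (1+γ))/y`. -/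
noncomputable def a1 (γ y : ℝ) : ℝ := ((2 * γ + 1) * y - (1 + γ)) / y

/-!
Writing `f = γ + h`, the constant singular term cancels (`a₀ + a₁ γ / (1 - y) = γ² / (1 - y)`)
and the equation becomes `h' + (1 + γ) h / y = G(y, h)` with `G` continuous and Lipschitz in `h`
near `0`. The solution with `h(0) = 0` of `H' + p H / y = ψ` is
`H(y) = y⁻ᵖ ∫₀ʸ tᵖ ψ(t) dt`, which is bounded by `y / (p + 1)` times `sup |ψ|`; hence
`h ↦ y^{-(1+γ)} ∫₀ʸ t^{1+γ} G(t, h t) dt` maps a small ball of `C([0, δ])` into itself and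
contracts it once `δ` is small. Its fixed point is `C¹` up to `y = 0`, because by l'Hôpital
`H(y) / y → ψ(0) / (p + 1)` and so `H'(y) = ψ(y) - p H(y) / y → ψ(0) / (p + 1)` as well.
-/

open Filter Topology intervalIntegral

noncomputable def weightedPrimitive (p : ℝ) (ψ : ℝ → ℝ) (y : ℝ) : ℝ :=
  y ^ (-p) * ∫ t in (0:ℝ)..y, t ^ p * ψ t

noncomputable def weightedPrimitiveDeriv (p : ℝ) (ψ : ℝ → ℝ) (y : ℝ) : ℝ :=
  if y = 0 then ψ 0 / (p + 1) else ψ y - p * weightedPrimitive p ψ y / y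

section WeightedPrimitive

variable {p : ℝ} {ψ : ℝ → ℝ}

@[simp]
lemma weightedPrimitive_zero : weightedPrimitive p ψ 0 = 0 := by
  simp [weightedPrimitive]

lemma intervalIntegrable_rpow_mul (hp : -1 < p) (hψ : Continuous ψ) (a b : ℝ) :
    IntervalIntegrable (fun t => t ^ p * ψ t) MeasureTheory.volume a b :=
  (intervalIntegrable_rpow' hp).mul_continuousOn hψ.continuousOn

lemma integral_rpow_mul_const (hp : -1 < p) (y c : ℝ) :
    ∫ t in (0:ℝ)..y, t ^ p * c = c * (y ^ (p + 1) / (p + 1)) := by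
  rw [intervalIntegral.integral_mul_const c (fun t : ℝ => t ^ p), integral_rpow (Or.inl hp),
    zero_rpow (by linarith), sub_zero, mul_comm]

lemma rpow_neg_mul_rpow_add_one {y : ℝ} (hy : 0 < y) (p : ℝ) : y ^ (-p) * y ^ (p + 1) = y := by
  rw [← rpow_add hy, neg_add_cancel_left, rpow_one]

lemma abs_weightedPrimitive_le {K y : ℝ} (hp : -1 < p) (hy : 0 ≤ y)
    (hψ : ∀ t ∈ Icc 0 y, |ψ t| ≤ K) :
    |weightedPrimitive p ψ y| ≤ K * y / (p + 1) := by
  rcases hy.eq_or_lt with rfl | hy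
  · simp
  have hint : ‖∫ t in (0:ℝ)..y, t ^ p * ψ t‖ ≤ ∫ t in (0:ℝ)..y, t ^ p * K := by
    refine intervalIntegral.norm_integral_le_of_norm_le hy.le
      (Eventually.of_forall fun t ht => ?_) ((intervalIntegrable_rpow' hp).mul_const K)
    rw [Real.norm_eq_abs, abs_mul, abs_of_nonneg (rpow_nonneg ht.1.le _)]
    exact mul_le_mul_of_nonneg_left (hψ t (Ioc_subset_Icc_self ht)) (rpow_nonneg ht.1.le _)
  rw [integral_rpow_mul_const hp] at hint
  calc |weightedPrimitive p ψ y| ≤ y ^ (-p) * (K * (y ^ (p + 1) / (p + 1))) := by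
        rw [weightedPrimitive, abs_mul, abs_of_nonneg (rpow_nonneg hy.le _), ← Real.norm_eq_abs]
        exact mul_le_mul_of_nonneg_left hint (rpow_nonneg hy.le _)
    _ = K * (y ^ (-p) * y ^ (p + 1)) / (p + 1) := by ring
    _ = K * y / (p + 1) := by rw [rpow_neg_mul_rpow_add_one hy]

lemma weightedPrimitive_sub {ψ₁ ψ₂ : ℝ → ℝ} (hp : -1 < p) (hψ₁ : Continuous ψ₁)
    (hψ₂ : Continuous ψ₂) (y : ℝ) :
    weightedPrimitive p ψ₁ y - weightedPrimitive p ψ₂ y =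
      weightedPrimitive p (fun t => ψ₁ t - ψ₂ t) y := by
  simp only [weightedPrimitive, mul_sub]
  rw [← mul_sub, ← integral_sub (intervalIntegrable_rpow_mul hp hψ₁ 0 y)
    (intervalIntegrable_rpow_mul hp hψ₂ 0 y)]

lemma hasDerivAt_integral_rpow_mul (hp : -1 < p) (hψ : Continuous ψ) {y : ℝ} (hy : 0 < y) :
    HasDerivAt (fun z => ∫ t in (0:ℝ)..z, t ^ p * ψ t) (y ^ p * ψ y) y := by
  have hcont : ContinuousOn (fun t => t ^ p * ψ t) (Ioi 0) :=
    (continuousOn_id.rpow_const fun t ht => Or.inl (ne_of_gt ht)).mul hψ.continuousOn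
  exact integral_hasDerivAt_right (intervalIntegrable_rpow_mul hp hψ 0 y)
    (hcont.stronglyMeasurableAtFilter isOpen_Ioi y hy) (hcont.continuousAt (Ioi_mem_nhds hy))

lemma hasDerivAt_weightedPrimitive (hp : -1 < p) (hψ : Continuous ψ) {y : ℝ} (hy : 0 < y) :
    HasDerivAt (weightedPrimitive p ψ) (ψ y - p * weightedPrimitive p ψ y / y) y := by
  have hprod : HasDerivAt (weightedPrimitive p ψ) _ y :=
    (hasDerivAt_rpow_const (p := -p) (Or.inl hy.ne')).mul
      (hasDerivAt_integral_rpow_mul hp hψ hy)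
  refine hprod.congr_deriv ?_
  rw [weightedPrimitive, rpow_sub_one hy.ne', ← mul_assoc (y ^ (-p)), ← rpow_add hy,
    neg_add_cancel, rpow_zero]
  ring

lemma tendsto_weightedPrimitive_div (hp : -1 < p) (hψ : Continuous ψ) :
    Tendsto (fun y => weightedPrimitive p ψ y / y) (𝓝[>] 0) (𝓝 (ψ 0 / (p + 1))) := by
  have hp1 : 0 < p + 1 := by linarith
  have hlim : Tendsto (fun y => y ^ p * ψ y / ((p + 1) * y ^ p)) (𝓝[>] 0)
      (𝓝 (ψ 0 / (p + 1))) := by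
    refine ((hψ.tendsto 0).mono_left nhdsWithin_le_nhds).div_const (p + 1) |>.congr' ?_
    filter_upwards [self_mem_nhdsWithin] with y (hy : 0 < y)
    field_simp [(rpow_pos_of_pos hy p).ne']
  have hlh := HasDerivAt.lhopital_zero_nhdsGT
    (eventually_nhdsWithin_of_forall fun y (hy : 0 < y) =>
      hasDerivAt_integral_rpow_mul hp hψ hy)
    (eventually_nhdsWithin_of_forall fun y (hy : 0 < y) =>
      by simpa using hasDerivAt_rpow_const (p := p + 1) (x := y) (Or.inl hy.ne'))
    (eventually_nhdsWithin_of_forall fun y (hy : 0 < y) =>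
      mul_ne_zero hp1.ne' (rpow_pos_of_pos hy p).ne')
    ?_ ?_ hlim
  · refine hlh.congr' ?_
    filter_upwards [self_mem_nhdsWithin] with y (hy : 0 < y)
    rw [weightedPrimitive, rpow_add_one hy.ne', rpow_neg hy.le]
    field_simp
  · have := (continuous_primitive (intervalIntegrable_rpow_mul hp hψ) 0).tendsto 0
    simpa using this.mono_left nhdsWithin_le_nhds
  · have := (continuousAt_rpow_const 0 (p + 1) (Or.inr hp1.le)).tendsto
    simpa [zero_rpow hp1.ne'] using this.mono_left nhdsWithin_le_nhds

lemma continuousOn_weightedPrimitive (hp : -1 < p) (hψ : Continuous ψ) :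
    ContinuousOn (weightedPrimitive p ψ) (Ici 0) := by
  intro y hy
  rcases (mem_Ici.1 hy).eq_or_lt with rfl | hy
  · rw [← continuousWithinAt_Ioi_iff_Ici, ContinuousWithinAt, weightedPrimitive_zero]
    have := (tendsto_weightedPrimitive_div hp hψ).mul
      ((continuous_id.tendsto 0).mono_left nhdsWithin_le_nhds)
    rw [id, mul_zero] at this
    refine this.congr' ?_
    filter_upwards [self_mem_nhdsWithin] with y (hy : 0 < y)
    simp [div_mul_cancel₀ _ hy.ne']
  · exact (hasDerivAt_weightedPrimitive hp hψ hy).continuousAt.continuousWithinAt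

lemma hasDerivWithinAt_weightedPrimitive (hp : -1 < p) (hψ : Continuous ψ) {y : ℝ}
    (hy : 0 ≤ y) :
    HasDerivWithinAt (weightedPrimitive p ψ) (weightedPrimitiveDeriv p ψ y) (Ici 0) y := by
  rcases hy.eq_or_lt with rfl | hy
  · rw [← hasDerivWithinAt_Ioi_iff_Ici, hasDerivWithinAt_iff_tendsto_slope' self_notMem_Ioi,
      weightedPrimitiveDeriv, if_pos rfl]
    refine (tendsto_weightedPrimitive_div hp hψ).congr fun y => ?_
    rw [slope_def_field, weightedPrimitive_zero, sub_zero, sub_zero]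
  · rw [weightedPrimitiveDeriv, if_neg hy.ne']
    exact (hasDerivAt_weightedPrimitive hp hψ hy).hasDerivWithinAt

lemma continuousOn_weightedPrimitiveDeriv (hp : -1 < p) (hψ : Continuous ψ) :
    ContinuousOn (weightedPrimitiveDeriv p ψ) (Ici 0) := by
  intro y hy
  rcases (mem_Ici.1 hy).eq_or_lt with rfl | hy
  · rw [← continuousWithinAt_Ioi_iff_Ici, ContinuousWithinAt, weightedPrimitiveDeriv, if_pos rfl]
    have := ((hψ.tendsto 0).mono_left nhdsWithin_le_nhds).sub
      ((tendsto_weightedPrimitive_div hp hψ).const_mul p)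
    have hp1 : p + 1 ≠ 0 := by linarith
    rw [show ψ 0 - p * (ψ 0 / (p + 1)) = ψ 0 / (p + 1) by field_simp; ring] at this
    refine this.congr' ?_
    filter_upwards [self_mem_nhdsWithin] with y (hy : 0 < y)
    rw [weightedPrimitiveDeriv, if_neg hy.ne', mul_div_assoc]
  · have hcont : ContinuousAt (fun z => ψ z - p * weightedPrimitive p ψ z / z) y :=
      hψ.continuousAt.sub
        ((continuousAt_const.mul (hasDerivAt_weightedPrimitive hp hψ hy).continuousAt).div
          continuousAt_id hy.ne')
    refine (hcont.congr_of_eventuallyEq ?_).continuousWithinAt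
    filter_upwards [lt_mem_nhds hy] with z (hz : 0 < z)
    rw [weightedPrimitiveDeriv, if_neg hz.ne']

end WeightedPrimitive

section FixedPoint

open scoped NNReal
open Metric

variable {p δ r C : ℝ} {L : ℝ≥0} {F : ℝ → ℝ → ℝ}

lemma abs_weightedPrimitive_comp_le (hp : -1 < p)
    (hFC : ∀ t ∈ Icc 0 δ, ∀ x ∈ closedBall (0:ℝ) r, |F t x| ≤ C) (hCδ : C * δ ≤ r * (p + 1))
    {g : ℝ → ℝ} (hg : ∀ t, g t ∈ closedBall 0 r) {y : ℝ} (hy : y ∈ Icc 0 δ) :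
    |weightedPrimitive p (fun t => F t (g t)) y| ≤ r := by
  have hp1 : 0 < p + 1 := by linarith
  have hC : 0 ≤ C := (abs_nonneg _).trans (hFC 0 ⟨le_rfl, hy.1.trans hy.2⟩ (g 0) (hg 0))
  calc |weightedPrimitive p (fun t => F t (g t)) y|
      ≤ C * y / (p + 1) := abs_weightedPrimitive_le hp hy.1 fun t ht =>
        hFC t ⟨ht.1, ht.2.trans hy.2⟩ _ (hg t)
    _ ≤ C * δ / (p + 1) := by gcongr; exact hy.2
    _ ≤ r := by rwa [div_le_iff₀ hp1]

lemma abs_weightedPrimitive_comp_sub_le (hp : -1 < p) (hF : Continuous (Function.uncurry F))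
    (hFL : ∀ t ∈ Icc 0 δ, LipschitzOnWith L (F t) (closedBall 0 r))
    {g₁ g₂ : ℝ → ℝ} (hg₁ : Continuous g₁) (hg₂ : Continuous g₂)
    (hg₁r : ∀ t, g₁ t ∈ closedBall 0 r) (hg₂r : ∀ t, g₂ t ∈ closedBall 0 r)
    {d : ℝ} (hd : ∀ t, |g₁ t - g₂ t| ≤ d) {y : ℝ} (hy : y ∈ Icc 0 δ) :
    |weightedPrimitive p (fun t => F t (g₁ t)) y - weightedPrimitive p (fun t => F t (g₂ t)) y|
      ≤ L * δ / (p + 1) * d := by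
  have hp1 : 0 < p + 1 := by linarith
  have hd0 : 0 ≤ d := (abs_nonneg _).trans (hd 0)
  have hcomp : ∀ {g : ℝ → ℝ}, Continuous g → Continuous fun t => F t (g t) :=
    fun hg => hF.comp (continuous_id.prodMk hg)
  rw [weightedPrimitive_sub hp (hcomp hg₁) (hcomp hg₂)]
  calc _ ≤ L * d * y / (p + 1) := abs_weightedPrimitive_le hp hy.1 fun t ht =>
        ((hFL t ⟨ht.1, ht.2.trans hy.2⟩).dist_le_mul _ (hg₁r t) _ (hg₂r t)).trans
          (mul_le_mul_of_nonneg_left (hd t) L.2)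
    _ ≤ L * d * δ / (p + 1) := by gcongr; exact hy.2
    _ = L * δ / (p + 1) * d := by ring

theorem exists_eq_weightedPrimitive_of_lipschitzOnWith (hp : -1 < p) (hδ : 0 ≤ δ) (hr : 0 ≤ r)
    (hF : Continuous (Function.uncurry F))
    (hFC : ∀ t ∈ Icc 0 δ, ∀ x ∈ closedBall (0:ℝ) r, |F t x| ≤ C)
    (hFL : ∀ t ∈ Icc 0 δ, LipschitzOnWith L (F t) (closedBall 0 r))
    (hCδ : C * δ ≤ r * (p + 1)) (hLδ : L * δ < p + 1) :
    ∃ h : ℝ → ℝ, Continuous h ∧ (∀ y, |h y| ≤ r) ∧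
      ∀ y ∈ Icc 0 δ, h y = weightedPrimitive p (fun t => F t (h t)) y := by
  have hp1 : 0 < p + 1 := by linarith
  let ext : C(Icc 0 δ, ℝ) → ℝ → ℝ := fun H => IccExtend hδ H
  have hext : ∀ H, Continuous (ext H) := fun H => H.continuous.Icc_extend'
  have hextr : ∀ H ∈ closedBall (0 : C(Icc 0 δ, ℝ)) r, ∀ t, ext H t ∈ closedBall 0 r :=
    fun H hH t => mem_closedBall_zero_iff.2
      ((H.norm_coe_le_norm _).trans (mem_closedBall_zero_iff.1 hH))
  let T : C(Icc 0 δ, ℝ) → C(Icc 0 δ, ℝ) := fun H =>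
    ⟨fun y => weightedPrimitive p (fun t => F t (ext H t)) y,
      ((continuousOn_weightedPrimitive hp (hF.comp (continuous_id.prodMk (hext H)))).mono
        Icc_subset_Ici_self).domRestrict⟩
  have hT : MapsTo T (closedBall 0 r) (closedBall 0 r) := fun H hH =>
    mem_closedBall_zero_iff.2 <| (ContinuousMap.norm_le _ hr).2 fun y =>
      abs_weightedPrimitive_comp_le hp hFC hCδ (hextr H hH) y.2
  let K : ℝ≥0 := ⟨L * δ / (p + 1), by positivity⟩
  have hK : ContractingWith K (hT.restrict T _ _) := by
    refine ⟨by rw [← NNReal.coe_lt_coe]; exact (div_lt_one hp1).2 hLδ, ?_⟩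
    refine LipschitzWith.of_dist_le_mul fun H₁ H₂ => ?_
    rw [Subtype.dist_eq, Subtype.dist_eq, ContinuousMap.dist_le (by positivity)]
    exact fun y => abs_weightedPrimitive_comp_sub_le hp hF hFL (hext _) (hext _)
      (hextr _ H₁.2) (hextr _ H₂.2)
      (fun t => by rw [← Real.dist_eq]; exact ContinuousMap.dist_apply_le_dist _) y.2
  obtain ⟨H, hH, hfix, -⟩ := hK.exists_fixedPoint' isClosed_closedBall.isComplete hT
    (mem_closedBall_self hr) (edist_ne_top _ _)
  refine ⟨ext H, hext H, fun y => mem_closedBall_zero_iff.1 (hextr H hH y), fun y hy => ?_⟩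
  show IccExtend hδ H y = T H ⟨y, hy⟩
  rw [hfix.eq, IccExtend_of_mem _ _ hy]

theorem exists_pos_eq_weightedPrimitive {δ₀ : ℝ} (hp : -1 < p) (hδ₀ : 0 < δ₀) (hr : 0 < r)
    (hF : Continuous (Function.uncurry F))
    (hFL : ∀ t ∈ Icc 0 δ₀, LipschitzOnWith L (F t) (closedBall 0 r)) :
    ∃ δ ∈ Ioc 0 δ₀, ∃ h : ℝ → ℝ, Continuous h ∧ (∀ y, |h y| ≤ r) ∧
      ∀ y ∈ Icc 0 δ, h y = weightedPrimitive p (fun t => F t (h t)) y := by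
  have hp1 : 0 < p + 1 := by linarith
  obtain ⟨C, hC⟩ :=
    (isCompact_Icc.prod (isCompact_closedBall (0:ℝ) r)).exists_bound_of_continuousOn
      hF.continuousOn
  set δ := min δ₀ (min (r * (p + 1) / (|C| + 1)) ((p + 1) / (L + 1)))
  have hδ : 0 < δ := lt_min hδ₀ (lt_min (by positivity) (by positivity))
  have hδδ₀ : δ ≤ δ₀ := min_le_left _ _
  refine ⟨δ, ⟨hδ, hδδ₀⟩, exists_eq_weightedPrimitive_of_lipschitzOnWith (C := |C|) hp hδ.le
    hr.le hF (fun t ht x hx => (hC (t, x) ⟨⟨ht.1, ht.2.trans hδδ₀⟩, hx⟩).trans (le_abs_self C))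
    (fun t ht => hFL t ⟨ht.1, ht.2.trans hδδ₀⟩) ?_ ?_⟩
  · calc |C| * δ ≤ (|C| + 1) * (r * (p + 1) / (|C| + 1)) := by
          gcongr
          · linarith
          · exact (min_le_right _ _).trans (min_le_left _ _)
      _ = r * (p + 1) := by field_simp
  · calc (L : ℝ) * δ < (L + 1) * δ := by linarith
      _ ≤ (L + 1) * ((p + 1) / (L + 1)) := by
          gcongr
          exact (min_le_right _ _).trans (min_le_right _ _)
      _ = p + 1 := by field_simp

end FixedPoint

lemma max_min_mem_Icc {α : Type*} [LinearOrder α] {l u : α} (h : l ≤ u) (t : α) :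
    max l (min t u) ∈ Icc l u :=
  ⟨le_max_left _ _, max_le h (min_le_right _ _)⟩

/-- `G(t, x)` of the header, with `t` clamped to `[0, 1/2]` to make it continuous on `ℝ²`. -/
noncomputable def riccatiField (γ : ℝ) (a : ℝ → ℝ) (t x : ℝ) : ℝ :=
  let s := max 0 (min t (1 / 2))
  (γ * (γ + x) + a s * (γ + x) ^ 2) / (1 - s)

section Riccati

open Metric

variable {γ : ℝ} {a : ℝ → ℝ}

lemma continuous_riccatiField (ha : ContinuousOn a (Icc 0 1)) :
    Continuous (Function.uncurry (riccatiField γ a)) := by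
  have has : Continuous fun q : ℝ × ℝ => a (max 0 (min q.1 (1 / 2))) :=
    ha.comp_continuous (by fun_prop) fun q =>
      Icc_subset_Icc_right (by norm_num) (max_min_mem_Icc one_half_pos.le q.1)
  have hx : Continuous fun q : ℝ × ℝ => γ + q.2 := by fun_prop
  refine Continuous.div ((continuous_const.mul hx).add (has.mul (hx.pow 2))) (by fun_prop)
    fun q => ?_
  linarith [(max_min_mem_Icc one_half_pos.le q.1).2]

lemma lipschitzOnWith_riccatiField {A : ℝ} (hγ : 0 < γ) (hA : ∀ s ∈ Icc (0:ℝ) 1, |a s| ≤ A)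
    (t : ℝ) :
    LipschitzOnWith (Real.toNNReal (2 * γ * (1 + 3 * A))) (riccatiField γ a t)
      (closedBall 0 (γ / 2)) := by
  refine LipschitzOnWith.of_dist_le_mul fun x hx y hy => ?_
  rw [mem_closedBall_zero_iff, Real.norm_eq_abs, abs_le] at hx hy
  set s := max 0 (min t (1 / 2))
  have hs : s ∈ Icc (0:ℝ) (1 / 2) := max_min_mem_Icc one_half_pos.le t
  have has : |a s| ≤ A := hA s (Icc_subset_Icc_right (by norm_num) hs)
  have hA0 : 0 ≤ A := (abs_nonneg _).trans has
  have hs1 : 1 / 2 ≤ 1 - s := by linarith [hs.2]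
  have hdiff : riccatiField γ a t x - riccatiField γ a t y =
      (x - y) * (γ + a s * (2 * γ + x + y)) / (1 - s) := by
    simp only [riccatiField]
    rw [div_sub_div_same]
    ring
  have hfactor : |γ + a s * (2 * γ + x + y)| ≤ γ * (1 + 3 * A) := by
    have : |2 * γ + x + y| ≤ 3 * γ := abs_le.2 ⟨by linarith, by linarith⟩
    calc |γ + a s * (2 * γ + x + y)| ≤ |γ| + |a s| * |2 * γ + x + y| := by
          rw [← abs_mul]; exact abs_add_le _ _
      _ ≤ γ + A * (3 * γ) := by
          rw [abs_of_pos hγ]; gcongr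
      _ = γ * (1 + 3 * A) := by ring
  rw [Real.dist_eq, Real.dist_eq, hdiff, abs_div, abs_mul, abs_of_pos (by linarith : 0 < 1 - s),
    Real.coe_toNNReal _ (by positivity)]
  calc |x - y| * |γ + a s * (2 * γ + x + y)| / (1 - s)
      ≤ |x - y| * (γ * (1 + 3 * A)) / (1 / 2) := by gcongr
    _ = 2 * γ * (1 + 3 * A) * |x - y| := by ring

lemma riccati_rhs_eq_riccatiField_sub (a : ℝ → ℝ) {γ y x : ℝ} (hy : y ∈ Ioo (0:ℝ) (1 / 2)) :
    a0 γ y + a1 γ y / (1 - y) * (γ + x) + a y / (1 - y) * (γ + x) ^ 2 =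
      riccatiField γ a y x - (1 + γ) * x / y := by
  have hy1 : 1 - y ≠ 0 := by linarith [hy.2]
  simp only [riccatiField, min_eq_left hy.2.le, max_eq_right hy.1.le, a0, a1]
  field_simp [hy.1.ne']
  ring

end Riccati

/-- Local existence of a strictly positive `C¹` solution of the
singular Riccati ODE `f' = a₀ + (a₁/(1−y))·f + (a/(1−y))·f²` with `f 0 = γ`. -/
theorem stmt1 (γ : ℝ) (hγ : γ ∈ Ioo (0:ℝ) 1) (a : ℝ → ℝ)
    (ha : ContinuousOn a (Icc (0:ℝ) 1)) :
    ∃ δ : ℝ, δ ∈ Ioc (0:ℝ) (1/2) ∧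
      ∃ f f' : ℝ → ℝ,
        (ContinuousOn f' (Icc (0:ℝ) δ) ∧
          ∀ y ∈ Icc (0:ℝ) δ, HasDerivWithinAt f (f' y) (Icc (0:ℝ) δ) y) ∧
        (∀ y ∈ Icc (0:ℝ) δ, 0 < f y) ∧
        f 0 = γ ∧
        (∀ y ∈ Ioo (0:ℝ) δ,
          f' y = a0 γ y + a1 γ y / (1 - y) * f y + a y / (1 - y) * f y ^ 2) := by
  have hp : -1 < 1 + γ := by linarith [hγ.1]
  obtain ⟨A, hA⟩ := isCompact_Icc.exists_bound_of_continuousOn ha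
  obtain ⟨δ, hδ, h, hh, hh_le, hh_eq⟩ := exists_pos_eq_weightedPrimitive hp one_half_pos
    (half_pos hγ.1) (continuous_riccatiField ha)
    fun t _ => lipschitzOnWith_riccatiField hγ.1 hA t
  set ψ := fun t => riccatiField γ a t (h t)
  have hψ : Continuous ψ := (continuous_riccatiField ha).comp (continuous_id.prodMk hh)
  refine ⟨δ, hδ, fun y => γ + h y, weightedPrimitiveDeriv (1 + γ) ψ,
    ⟨(continuousOn_weightedPrimitiveDeriv hp hψ).mono Icc_subset_Ici_self, fun y hy => ?_⟩,
    fun y _ => ?_, ?_, fun y hy => ?_⟩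
  · exact (((hasDerivWithinAt_weightedPrimitive hp hψ hy.1).mono Icc_subset_Ici_self).congr
      hh_eq (hh_eq y hy)).const_add γ
  · linarith [(abs_le.1 (hh_le y)).1, hγ.1]
  · simp [hh_eq 0 ⟨le_rfl, hδ.1.le⟩]
  · rw [weightedPrimitiveDeriv, if_neg hy.1.ne', ← hh_eq y (Ioo_subset_Icc_self hy),
      riccati_rhs_eq_riccatiField_sub a ⟨hy.1, hy.2.trans_le hδ.2⟩]
end

section
/- Let γ ∈ (0,1), δ ∈ (0,1], and let a, b : [0,δ] → ℝ be continuous functions with a(y) ≤ b(y) for all y ∈ [0,δ]. Suppose f, g ∈ C¹([0,δ]) satisfy f(0) = g(0) = γ, f'(y) = a₀(y) + (a₁(y)/(1−y))·f(y) + (a(y)/(1−y))·f(y)² for y ∈ (0,δ), and g'(y) = a₀(y) + (a₁(y)/(1−y))·g(y) + (b(y)/(1−y))·g(y)² for y ∈ (0,δ). Then f(y) ≤ g(y) for all y ∈ [0,δ]. Moreover, if a(y) < b(y) for all y ∈ [0,δ], then f(y) < g(y) for all y ∈ (0,δ]. -/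
/-!
Put `h = g - f`. Subtracting the two equations cancels `a₀` and leaves the linear equation
`h' = c h + d` with `c = (a₁ + a (f + g)) / (1 - y)` and `d = (b - a) g² / (1 - y) ≥ 0`.
Although `c → -∞` at `0`, it is bounded above on `(0, y)` for `y < 1`, which is all a barrier
argument needs to keep `h ≥ 0` from `h(0) = 0`. If `a < b` and `h(y) = 0` with `y < 1`, then
`h` vanishes on `(0, y]` by backward uniqueness (`c` is bounded on compact subsets of `(0, 1)`),
so every earlier point is an interior minimum of `h`, where `0 = h' = d`; but `d > 0` near `0`
since `g(0) = γ > 0`. At `y = δ = 1`, letting `y → 1` in `(1 - y) h' = (1 - y) c h + (b - a) g²`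
forces `f(1) = g(1) = 0`, hence `(1 - y) c → γ > 0`, and `h` is nondecreasing near `1`.
-/

open Set Real

open Filter Topology

theorem nonneg_of_mul_le_deriv_of_neg {u u' : ℝ → ℝ} {α β M : ℝ}
    (hu : ContinuousOn u (Icc α β))
    (hu' : ∀ x ∈ Ico α β, HasDerivWithinAt u (u' x) (Ici x) x) (hα : 0 ≤ u α)
    (hM : ∀ x ∈ Ioo α β, u x < 0 → M * u x ≤ u' x) : ∀ x ∈ Icc α β, 0 ≤ u x := by
  -- `-u` stays below each barrier `B ε`, which solves `B' = (M + 1) B` and so outgrows `M B`.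
  set B : ℝ → ℝ → ℝ := fun ε t => ε * exp ((M + 1) * (t - α))
  have hB : ∀ ε t, HasDerivAt (B ε) ((M + 1) * B ε t) t := fun ε t =>
    ((((hasDerivAt_id' t).sub_const α).const_mul (M + 1)).exp.const_mul ε).congr_deriv (by ring)
  have hbarrier : ∀ ε > 0, ∀ x ∈ Icc α β, -u x ≤ B ε x := by
    intro ε hε
    refine image_le_of_deriv_right_lt_deriv_boundary' hu.neg (fun t ht => (hu' t ht).neg)
      ?_ (fun t _ => (hB ε t).continuousAt.continuousWithinAt)
      (fun t _ => (hB ε t).hasDerivWithinAt) ?_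
    · simp only [B, Pi.neg_apply, sub_self, mul_zero, exp_zero, mul_one]
      linarith
    · intro t ht hcontact
      rw [Pi.neg_apply] at hcontact
      have hBpos : 0 < B ε t := by positivity
      have htα : t ≠ α := by rintro rfl; linarith
      have hut : u t = -B ε t := by linarith
      have := hM t ⟨lt_of_le_of_ne ht.1 htα.symm, ht.2⟩ (by linarith)
      rw [hut] at this
      linarith
  intro x hx
  by_contra! hneg
  have hE : 0 < exp ((M + 1) * (x - α)) := exp_pos _
  have := hbarrier (-u x / (2 * exp ((M + 1) * (x - α))))
    (div_pos (by linarith) (by positivity)) x hx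
  simp only [B] at this
  field_simp at this
  linarith

theorem monotoneOn_mul_exp_of_mul_le_deriv {u u' : ℝ → ℝ} {α β K : ℝ}
    (hu : ContinuousOn u (Icc α β)) (hu' : ∀ x ∈ Ioo α β, HasDerivAt u (u' x) x)
    (hK : ∀ x ∈ Ioo α β, K * u x ≤ u' x) :
    MonotoneOn (fun t => u t * exp (-(K * t))) (Icc α β) := by
  refine monotoneOn_of_hasDerivWithinAt_nonneg
    (f' := fun x => (u' x - K * u x) * exp (-(K * x))) (convex_Icc α β) (hu.mul (by fun_prop))
    ?_ ?_ <;> rw [interior_Icc]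
  · exact fun x hx => ((hu' x hx).mul ((hasDerivAt_id' x).const_mul K).neg.exp).congr_deriv
      (by simp only [Pi.neg_apply, mul_one, mul_neg]; ring) |>.hasDerivWithinAt
  · exact fun x hx => mul_nonneg (sub_nonneg.2 (hK x hx)) (exp_pos _).le

theorem nonneg_of_deriv_eq_mul_add {h h' c d : ℝ → ℝ} {α β : ℝ}
    (hh : ContinuousOn h (Icc α β))
    (hh' : ∀ x ∈ Ico α β, HasDerivWithinAt h (h' x) (Ici x) x) (hα : 0 ≤ h α)
    (hode : ∀ x ∈ Ioo α β, h' x = c x * h x + d x) (hd : ∀ x ∈ Ioo α β, 0 ≤ d x)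
    (hc : ∀ y < β, ∃ M, ∀ x ∈ Ioo α y, c x ≤ M) : ∀ x ∈ Icc α β, 0 ≤ h x := by
  have hlt : ∀ y ∈ Ico α β, 0 ≤ h y := fun y hy => by
    obtain ⟨M, hM⟩ := hc y hy.2
    refine nonneg_of_mul_le_deriv_of_neg (M := M) (hh.mono (Icc_subset_Icc_right hy.2.le))
      (fun x hx => hh' x ⟨hx.1, hx.2.trans hy.2⟩) hα (fun x hx hneg => ?_) y ⟨hy.1, le_rfl⟩
    have hxβ : x ∈ Ioo α β := ⟨hx.1, hx.2.trans hy.2⟩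
    rw [hode x hxβ]
    nlinarith [hM x hx, hd x hxβ]
  intro x hx
  rcases hx.2.lt_or_eq with hxβ | rfl
  · exact hlt x ⟨hx.1, hxβ⟩
  rcases hx.1.eq_or_lt with rfl | hαx
  · exact hα
  have hclosure : x ∈ closure (Ico α x) := by
    rw [closure_Ico hαx.ne]
    exact right_mem_Icc.2 hαx.le
  simpa [closure_Ici] using
    ((hh x hx).mono Ico_subset_Icc_self).mem_closure hclosure (t := Ici 0) hlt

theorem eq_zero_of_deriv_eq_mul_add {h h' c d : ℝ → ℝ} {α β : ℝ} (hαβ : α ≤ β)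
    (hh : ContinuousOn h (Icc α β)) (hh' : ∀ x ∈ Ioo α β, HasDerivAt h (h' x) x)
    (hnn : ∀ x ∈ Icc α β, 0 ≤ h x) (hode : ∀ x ∈ Ioo α β, h' x = c x * h x + d x)
    (hd : ∀ x ∈ Ioo α β, 0 ≤ d x) (hc : BddBelow (c '' Ioo α β)) (hβ : h β = 0) :
    h α = 0 := by
  obtain ⟨K, hK⟩ := hc
  have hmono := monotoneOn_mul_exp_of_mul_le_deriv (K := K) hh hh' fun x hx => by
    rw [hode x hx]
    nlinarith [hK (mem_image_of_mem c hx), hnn x (Ioo_subset_Icc_self hx), hd x hx]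
  have := hmono (left_mem_Icc.2 hαβ) (right_mem_Icc.2 hαβ) hαβ
  simp only [hβ, zero_mul] at this
  exact le_antisymm (nonpos_of_mul_nonpos_left this (exp_pos _)) (hnn α (left_mem_Icc.2 hαβ))

theorem pos_of_deriv_eq_mul_add {h h' c d : ℝ → ℝ} {α β y : ℝ}
    (hh : ContinuousOn h (Icc α β)) (hh' : ∀ x ∈ Ioo α β, HasDerivAt h (h' x) x)
    (hnn : ∀ x ∈ Icc α β, 0 ≤ h x) (hode : ∀ x ∈ Ioo α β, h' x = c x * h x + d x)
    (hd : ∀ x ∈ Ioo α β, 0 ≤ d x) (hy : y ∈ Ioc α β)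
    (hc : ∀ p ∈ Ioo α y, BddBelow (c '' Ioo p y)) (hdpos : ∃ p ∈ Ioo α y, 0 < d p) :
    0 < h y := by
  obtain ⟨p, hp, hdp⟩ := hdpos
  refine (hnn y (Ioc_subset_Icc_self hy)).lt_of_ne' fun hy0 => ?_
  have hsub : Icc p y ⊆ Icc α β := Icc_subset_Icc hp.1.le hy.2
  have hpβ : p ∈ Ioo α β := ⟨hp.1, hp.2.trans_le hy.2⟩
  have hsubIoo : Ioo p y ⊆ Ioo α β := Ioo_subset_Ioo hp.1.le hy.2
  have hp0 : h p = 0 := eq_zero_of_deriv_eq_mul_add hp.2.le (hh.mono hsub)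
    (fun x hx => hh' x (hsubIoo hx)) (fun x hx => hnn x (hsub hx))
    (fun x hx => hode x (hsubIoo hx)) (fun x hx => hd x (hsubIoo hx)) (hc p hp) hy0
  have hmin : IsLocalMin h p :=
    Filter.mem_of_superset (Icc_mem_nhds hpβ.1 hpβ.2) fun x hx => hp0 ▸ hnn x hx
  have := (hmin.hasDerivAt_eq_zero (hh' p hpβ)).symm.trans (hode p hpβ)
  rw [hp0, mul_zero, zero_add] at this
  exact hdp.ne this

theorem pos_of_eventually_deriv_nonneg {h h' : ℝ → ℝ} {α β : ℝ} (hαβ : α < β)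
    (hh : ContinuousOn h (Icc α β)) (hh' : ∀ x ∈ Ioo α β, HasDerivAt h (h' x) x)
    (hpos : ∀ x ∈ Ioo α β, 0 < h x) (hderiv : ∀ᶠ x in 𝓝[<] β, 0 ≤ h' x) : 0 < h β := by
  obtain ⟨p, hp, hsub⟩ := mem_nhdsLT_iff_exists_Ioo_subset.1 hderiv
  set q := max p α
  have hqβ : q < β := max_lt hp hαβ
  have hmono : MonotoneOn h (Icc q β) := by
    refine monotoneOn_of_hasDerivWithinAt_nonneg (f' := h') (convex_Icc q β)
      (hh.mono (Icc_subset_Icc (le_max_right p α) le_rfl)) ?_ ?_ <;> rw [interior_Icc]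
    · exact fun x hx => (hh' x ⟨(le_max_right p α).trans_lt hx.1, hx.2⟩).hasDerivWithinAt
    · exact fun x hx => hsub ⟨(le_max_left p α).trans_lt hx.1, hx.2⟩
  calc 0 < h ((q + β) / 2) := hpos _ ⟨by linarith [le_max_right p α], by linarith⟩
    _ ≤ h β := hmono ⟨by linarith, by linarith⟩ ⟨hqβ.le, le_rfl⟩ (by linarith)

noncomputable def riccatiDiffCoeff (γ : ℝ) (a f g : ℝ → ℝ) (t : ℝ) : ℝ :=
  a1 γ t + a t * (f t + g t)

theorem riccatiDiffCoeff_le {γ t : ℝ} {a f g : ℝ → ℝ} (hγ : -1 ≤ γ) (ht : 0 < t) :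
    riccatiDiffCoeff γ a f g t ≤ 2 * γ + 1 + a t * (f t + g t) := by
  have : a1 γ t = 2 * γ + 1 - (1 + γ) / t := by rw [a1]; field_simp
  have : 0 ≤ (1 + γ) / t := div_nonneg (by linarith) ht.le
  unfold riccatiDiffCoeff
  linarith

theorem exists_riccatiDiffCoeff_div_le {γ y : ℝ} {a f g : ℝ → ℝ} (hγ : -1 ≤ γ) (hy : y < 1)
    (hA : BddAbove ((fun t => a t * (f t + g t)) '' Ioo 0 y)) :
    ∃ M, ∀ t ∈ Ioo 0 y, riccatiDiffCoeff γ a f g t / (1 - t) ≤ M := by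
  obtain ⟨N, hN⟩ := hA
  set N' := max (2 * γ + 1 + N) 0
  refine ⟨N' / (1 - y), fun t ht => ?_⟩
  have hnum : riccatiDiffCoeff γ a f g t ≤ N' := by
    linarith [riccatiDiffCoeff_le (a := a) (f := f) (g := g) hγ ht.1,
      hN (mem_image_of_mem _ ht), le_max_left (2 * γ + 1 + N) 0]
  calc riccatiDiffCoeff γ a f g t / (1 - t) ≤ N' / (1 - t) :=
        div_le_div_of_nonneg_right hnum (by linarith [ht.2])
    _ ≤ N' / (1 - y) :=
        div_le_div_of_nonneg_left (le_max_right _ _) (by linarith) (by linarith [ht.2])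

noncomputable def riccatiForcing (a b g : ℝ → ℝ) (t : ℝ) : ℝ :=
  (b t - a t) * g t ^ 2 / (1 - t)

theorem riccatiForcing_nonneg {a b g : ℝ → ℝ} {t : ℝ} (hab : a t ≤ b t) (ht : t ≤ 1) :
    0 ≤ riccatiForcing a b g t :=
  div_nonneg (mul_nonneg (sub_nonneg.2 hab) (sq_nonneg _)) (sub_nonneg.2 ht)

structure IsRiccatiSolution (γ δ : ℝ) (a f f' : ℝ → ℝ) : Prop where
  continuousOn_deriv : ContinuousOn f' (Icc 0 δ)
  hasDerivWithinAt : ∀ y ∈ Icc 0 δ, HasDerivWithinAt f (f' y) (Icc 0 δ) y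
  apply_zero : f 0 = γ
  deriv_eq : ∀ y ∈ Ioo 0 δ, f' y = a0 γ y + a1 γ y / (1 - y) * f y + a y / (1 - y) * f y ^ 2

namespace IsRiccatiSolution

variable {γ δ : ℝ} {a b f f' g g' : ℝ → ℝ}

theorem continuousOn (hf : IsRiccatiSolution γ δ a f f') : ContinuousOn f (Icc 0 δ) :=
  fun y hy => (hf.hasDerivWithinAt y hy).continuousWithinAt

theorem hasDerivAt (hf : IsRiccatiSolution γ δ a f f') {y : ℝ} (hy : y ∈ Ioo 0 δ) :
    HasDerivAt f (f' y) y :=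
  (hf.hasDerivWithinAt y (Ioo_subset_Icc_self hy)).hasDerivAt (Icc_mem_nhds hy.1 hy.2)

theorem continuousOn_riccatiDiffCoeff (hf : IsRiccatiSolution γ δ a f f')
    (hg : IsRiccatiSolution γ δ b g g') (ha : ContinuousOn a (Icc 0 δ)) {p : ℝ} (hp : 0 < p) :
    ContinuousOn (riccatiDiffCoeff γ a f g) (Icc p δ) := by
  have hsub : Icc p δ ⊆ Icc 0 δ := Icc_subset_Icc_left hp.le
  have ha1 : ContinuousOn (a1 γ) (Icc p δ) :=
    ContinuousOn.div (by fun_prop) (by fun_prop) fun _ ht => (hp.trans_le ht.1).ne'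
  exact ha1.add ((ha.mono hsub).mul ((hf.continuousOn.add hg.continuousOn).mono hsub))

theorem sub_deriv_eq (hf : IsRiccatiSolution γ δ a f f') (hg : IsRiccatiSolution γ δ b g g')
    {t : ℝ} (ht : t ∈ Ioo 0 δ) :
    g' t - f' t = riccatiDiffCoeff γ a f g t / (1 - t) * (g t - f t)
      + riccatiForcing a b g t := by
  rw [hf.deriv_eq t ht, hg.deriv_eq t ht, riccatiDiffCoeff, riccatiForcing]
  ring

theorem le (hf : IsRiccatiSolution γ δ a f f') (hg : IsRiccatiSolution γ δ b g g')
    (hγ : -1 ≤ γ) (hδ : δ ≤ 1) (ha : ContinuousOn a (Icc 0 δ))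
    (hab : ∀ y ∈ Ioo 0 δ, a y ≤ b y) : ∀ y ∈ Icc 0 δ, f y ≤ g y := by
  have hA : BddAbove ((fun t => a t * (f t + g t)) '' Icc 0 δ) :=
    isCompact_Icc.bddAbove_image (ha.mul (hf.continuousOn.add hg.continuousOn))
  have := nonneg_of_deriv_eq_mul_add (hg.continuousOn.sub hf.continuousOn)
    (fun t ht => ((hg.hasDerivWithinAt t (Ico_subset_Icc_self ht)).sub
      (hf.hasDerivWithinAt t (Ico_subset_Icc_self ht))).mono_of_mem_nhdsWithin
      (Icc_mem_nhdsGE_of_mem ht))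
    (by simp [hf.apply_zero, hg.apply_zero]) (fun t ht => hf.sub_deriv_eq hg ht)
    (fun t ht => riccatiForcing_nonneg (hab t ht) (by linarith [ht.2]))
    (fun y hy => exists_riccatiDiffCoeff_div_le hγ (hy.trans_le hδ)
      (hA.mono (image_mono (Ioo_subset_Icc_self.trans (Icc_subset_Icc_right hy.le)))))
  exact fun y hy => sub_nonneg.1 (this y hy)

theorem lt_of_lt_one (hf : IsRiccatiSolution γ δ a f f') (hg : IsRiccatiSolution γ δ b g g')
    (hγ : 0 < γ) (hδ : δ ≤ 1) (ha : ContinuousOn a (Icc 0 δ))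
    (hab : ∀ y ∈ Icc 0 δ, a y < b y) {y : ℝ} (hy : y ∈ Ioc 0 δ) (hy1 : y < 1) : f y < g y := by
  have hle := hf.le hg (by linarith) hδ ha fun t ht => (hab t (Ioo_subset_Icc_self ht)).le
  have hδ0 : 0 < δ := hy.1.trans_le hy.2
  have hgpos : ∀ᶠ t in 𝓝[>] 0, 0 < g t := by
    have := (hg.continuousOn 0 (left_mem_Icc.2 hδ0.le)).eventually
      (lt_mem_nhds (hg.apply_zero ▸ hγ))
    rw [nhdsWithin_Icc_eq_nhdsGE hδ0] at this
    exact this.filter_mono (nhdsWithin_mono _ Ioi_subset_Ici_self)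
  obtain ⟨q, hgq, hq⟩ := (hgpos.and (Ioo_mem_nhdsGT hy.1)).exists
  refine sub_pos.1 (pos_of_deriv_eq_mul_add (h := fun t => g t - f t)
    (hg.continuousOn.sub hf.continuousOn)
    (fun t ht => (hg.hasDerivAt ht).sub (hf.hasDerivAt ht)) (fun t ht => sub_nonneg.2 (hle t ht))
    (fun t ht => hf.sub_deriv_eq hg ht)
    (fun t ht => riccatiForcing_nonneg (hab t (Ioo_subset_Icc_self ht)).le (by linarith [ht.2]))
    hy (fun p hp => ?_) ⟨q, hq, ?_⟩)
  · have hc : ContinuousOn (fun t => riccatiDiffCoeff γ a f g t / (1 - t)) (Icc p y) :=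
      ((hf.continuousOn_riccatiDiffCoeff hg ha hp.1).mono (Icc_subset_Icc_right hy.2)).div
        (by fun_prop) fun t ht => by linarith [ht.2]
    exact (isCompact_Icc.bddBelow_image hc).mono (image_mono Ioo_subset_Icc_self)
  · exact div_pos (mul_pos (sub_pos.2 (hab q ⟨hq.1.le, hq.2.le.trans hy.2⟩)) (pow_pos hgq 2))
      (by linarith [hq.2])

theorem apply_one_eq_zero (hf : IsRiccatiSolution γ 1 a f f') (hg : IsRiccatiSolution γ 1 b g g')
    (ha : ContinuousOn a (Icc 0 1)) (hb : ContinuousOn b (Icc 0 1)) (hab : a 1 < b 1)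
    (hfg : f 1 = g 1) : g 1 = 0 := by
  have hsub : Icc (1 / 2 : ℝ) 1 ⊆ Icc 0 1 := Icc_subset_Icc_left (by norm_num)
  have heq : EqOn (fun t => (1 - t) * (g' t - f' t))
      (fun t => riccatiDiffCoeff γ a f g t * (g t - f t) + (b t - a t) * g t ^ 2)
      (Icc (1 / 2) 1) := by
    refine EqOn.of_subset_closure (fun t ht => ?_) ?_ ?_ Ioo_subset_Icc_self
      (by rw [closure_Ioo (by norm_num)])
    · have ht1 : 1 - t ≠ 0 := by linarith [ht.2]
      simp only [hf.sub_deriv_eq hg ⟨by linarith [ht.1], ht.2⟩, riccatiForcing]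
      field_simp
    · exact (by fun_prop : ContinuousOn (fun t : ℝ => 1 - t) _).mul
        ((hg.continuousOn_deriv.sub hf.continuousOn_deriv).mono hsub)
    · exact ((hf.continuousOn_riccatiDiffCoeff hg ha (by norm_num)).mul
        ((hg.continuousOn.sub hf.continuousOn).mono hsub)).add
        (((hb.mono hsub).sub (ha.mono hsub)).mul ((hg.continuousOn.mono hsub).pow 2))
  have := heq (right_mem_Icc.2 (by norm_num))
  simp only [sub_self, zero_mul, hfg, mul_zero, zero_add] at this
  exact pow_eq_zero_iff two_ne_zero |>.1
    ((mul_eq_zero.1 this.symm).resolve_left (sub_pos.2 hab).ne')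

theorem lt_at_one (hf : IsRiccatiSolution γ 1 a f f') (hg : IsRiccatiSolution γ 1 b g g')
    (hγ : 0 < γ) (ha : ContinuousOn a (Icc 0 1)) (hb : ContinuousOn b (Icc 0 1))
    (hab : ∀ y ∈ Icc 0 1, a y < b y) : f 1 < g 1 := by
  have hle := hf.le hg (by linarith) le_rfl ha fun t ht => (hab t (Ioo_subset_Icc_self ht)).le
  refine (hle 1 (right_mem_Icc.2 zero_le_one)).lt_of_ne fun hfg => ?_
  have hg1 := hf.apply_one_eq_zero hg ha hb (hab 1 (right_mem_Icc.2 zero_le_one)) hfg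
  have hA1 : riccatiDiffCoeff γ a f g 1 = γ := by
    simp only [riccatiDiffCoeff, a1, hfg, hg1]
    ring
  have hA : ∀ᶠ t in 𝓝[<] 1, 0 < riccatiDiffCoeff γ a f g t := by
    have := (hf.continuousOn_riccatiDiffCoeff hg ha one_half_pos 1
      (right_mem_Icc.2 (by norm_num))).eventually (lt_mem_nhds (hA1 ▸ hγ))
    rw [nhdsWithin_Icc_eq_nhdsLE (by norm_num)] at this
    exact this.filter_mono (nhdsWithin_mono _ Iio_subset_Iic_self)
  have hderiv : ∀ᶠ t in 𝓝[<] 1, 0 ≤ g' t - f' t := by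
    filter_upwards [hA, Ioo_mem_nhdsLT zero_lt_one] with t hAt ht
    rw [hf.sub_deriv_eq hg ht]
    exact add_nonneg (mul_nonneg (div_nonneg hAt.le (by linarith [ht.2]))
      (sub_nonneg.2 (hle t (Ioo_subset_Icc_self ht))))
      (riccatiForcing_nonneg (hab t (Ioo_subset_Icc_self ht)).le ht.2.le)
  have := pos_of_eventually_deriv_nonneg (h := fun t => g t - f t) zero_lt_one
    (hg.continuousOn.sub hf.continuousOn)
    (fun t ht => (hg.hasDerivAt ht).sub (hf.hasDerivAt ht))
    (fun t ht => sub_pos.2 (hf.lt_of_lt_one hg hγ le_rfl ha hab (Ioo_subset_Ioc_self ht) ht.2))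
    hderiv
  simp [hfg] at this

end IsRiccatiSolution

/-- **Comparison.** If `a ≤ b` on `[0,δ]` and `f, g` are `C¹` solutions
of the respective singular Riccati Cauchy problems with `f 0 = g 0 = γ`, then `f ≤ g`
on `[0,δ]`; if moreover `a < b` on `[0,δ]`, then `f < g` on `(0,δ]`. -/
theorem stmt2 (γ δ : ℝ) (hγ : γ ∈ Ioo (0:ℝ) 1) (hδ : δ ∈ Ioc (0:ℝ) 1)
    (a b : ℝ → ℝ)
    (hacont : ContinuousOn a (Icc (0:ℝ) δ)) (hbcont : ContinuousOn b (Icc (0:ℝ) δ))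
    (hab : ∀ y ∈ Icc (0:ℝ) δ, a y ≤ b y)
    (f f' g g' : ℝ → ℝ)
    (hf : ContinuousOn f' (Icc (0:ℝ) δ) ∧
      ∀ y ∈ Icc (0:ℝ) δ, HasDerivWithinAt f (f' y) (Icc (0:ℝ) δ) y)
    (hg : ContinuousOn g' (Icc (0:ℝ) δ) ∧
      ∀ y ∈ Icc (0:ℝ) δ, HasDerivWithinAt g (g' y) (Icc (0:ℝ) δ) y)
    (hf0 : f 0 = γ) (hg0 : g 0 = γ)
    (hfode : ∀ y ∈ Ioo (0:ℝ) δ,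
      f' y = a0 γ y + a1 γ y / (1 - y) * f y + a y / (1 - y) * f y ^ 2)
    (hgode : ∀ y ∈ Ioo (0:ℝ) δ,
      g' y = a0 γ y + a1 γ y / (1 - y) * g y + b y / (1 - y) * g y ^ 2) :
    (∀ y ∈ Icc (0:ℝ) δ, f y ≤ g y) ∧
    ((∀ y ∈ Icc (0:ℝ) δ, a y < b y) → ∀ y ∈ Ioc (0:ℝ) δ, f y < g y) := by
  have hfs : IsRiccatiSolution γ δ a f f' := ⟨hf.1, hf.2, hf0, hfode⟩
  have hgs : IsRiccatiSolution γ δ b g g' := ⟨hg.1, hg.2, hg0, hgode⟩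
  refine ⟨hfs.le hgs (by linarith [hγ.1]) hδ.2 hacont fun y hy => hab y (Ioo_subset_Icc_self hy),
    fun hlt y hy => ?_⟩
  rcases (hy.2.trans hδ.2).lt_or_eq with hy1 | rfl
  · exact hfs.lt_of_lt_one hgs hγ.1 hδ.2 hacont hlt hy hy1
  · obtain rfl : δ = 1 := le_antisymm hδ.2 hy.2
    exact hfs.lt_at_one hgs hγ.1 hacont hbcont hlt
end

section
/- Let γ ∈ (0,1) and a₃ ∈ (−∞, −γ], and let f ∈ C([0,1]) ∩ C¹([0,1)) with 0 ≤ f ≤ 1 satisfy f(0) = γ, f(1) = −γ/a₃, and f'(y) = a₀(y) + (a₁(y)/(1−y))·f(y) + (a₃/(1−y))·f(y)² for all y ∈ (0,1). Then: (i) if a₃ ∈ (−∞, −γ), then f(y) < 1 for all y ∈ [0,1]; and (ii) if a₃ ∈ [−1, −γ], then f(y) ≥ γ for all y ∈ [0,1]. -/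
open Set Real

/-!
Both bounds are maximum principles. Multiplying the Riccati equation by `y(1-y)` turns its
right-hand side at `(y, u)` into the polynomial `N(y, u) = riccatiNumerator γ a3 y u`, so
`N(y, f y) = 0` at every interior extremum of `f`. The boundary values keep the extrema of `f`
of interest away from `0` and `1`, and `N(y, 1) = (γ + a₃) y - (1 - γ²)(1 - y) < 0` when
`a₃ < -γ`, while `N(y, u) = (1 + γ)(1 - y)(γ - u) + y u (γ + a₃ u) > 0` when `0 ≤ u < γ` and
`a₃ ≥ -1`.
-/

def riccatiNumerator (γ a3 y u : ℝ) : ℝ :=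
  γ * (1 + γ) * (1 - y) + ((2 * γ + 1) * y - (1 + γ)) * u + a3 * y * u ^ 2

section RiccatiNumerator

variable {γ a3 y u : ℝ}

lemma riccati_rhs_eq (hy : y ∈ Ioo (0:ℝ) 1) :
    a0 γ y + a1 γ y / (1 - y) * u + a3 / (1 - y) * u ^ 2 =
      riccatiNumerator γ a3 y u / (y * (1 - y)) := by
  have hy0 : y ≠ 0 := hy.1.ne'
  have hy1 : 1 - y ≠ 0 := (sub_pos.mpr hy.2).ne'
  unfold a0 a1 riccatiNumerator
  field_simp

lemma riccatiNumerator_one_neg (hγ : γ ∈ Ioo (0:ℝ) 1) (ha3 : a3 < -γ)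
    (hy : y ∈ Ioo (0:ℝ) 1) :
    riccatiNumerator γ a3 y 1 < 0 := by
  have hN : riccatiNumerator γ a3 y 1 = (γ + a3) * y - (1 - γ ^ 2) * (1 - y) := by
    unfold riccatiNumerator; ring
  have hγ2 : 0 < 1 - γ ^ 2 := by nlinarith [hγ.1, hγ.2]
  rw [hN]
  nlinarith [mul_pos (sub_pos.mpr hy.2) hγ2, hy.1]

lemma riccatiNumerator_pos_of_lt (hγ : 0 < γ) (ha3 : -1 ≤ a3) (hy : y ∈ Ioo (0:ℝ) 1)
    (hu : 0 ≤ u) (huγ : u < γ) : 0 < riccatiNumerator γ a3 y u := by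
  have hN : riccatiNumerator γ a3 y u =
      (1 + γ) * (1 - y) * (γ - u) + y * u * (γ + a3 * u) := by
    unfold riccatiNumerator; ring
  have hfirst : 0 < (1 + γ) * (1 - y) * (γ - u) := by
    have := sub_pos.mpr hy.2
    have := sub_pos.mpr huγ
    positivity
  have hsecond : 0 ≤ y * u * (γ + a3 * u) :=
    mul_nonneg (mul_nonneg hy.1.le hu) (by nlinarith)
  rw [hN]
  exact add_pos_of_pos_of_nonneg hfirst hsecond

end RiccatiNumerator

lemma hasDerivWithinAt_eq_zero_of_isExtrOn {f : ℝ → ℝ} {f' a b y : ℝ} (hy : y ∈ Ioo a b)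
    (hext : IsExtrOn f (Icc a b) y) (hd : HasDerivWithinAt f f' (Ico a b) y) : f' = 0 :=
  (hext.isLocalExtr (Icc_mem_nhds hy.1 hy.2)).hasDerivAt_eq_zero
    (hd.hasDerivAt (Ico_mem_nhds hy.1 hy.2))

lemma riccatiNumerator_eq_zero_of_isExtrOn {γ a3 y : ℝ} {f f' : ℝ → ℝ}
    (hfd : ∀ y ∈ Ico (0:ℝ) 1, HasDerivWithinAt f (f' y) (Ico (0:ℝ) 1) y)
    (hode : ∀ y ∈ Ioo (0:ℝ) 1,
      f' y = a0 γ y + a1 γ y / (1 - y) * f y + a3 / (1 - y) * f y ^ 2)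
    (hy : y ∈ Ioo (0:ℝ) 1) (hext : IsExtrOn f (Icc 0 1) y) :
    riccatiNumerator γ a3 y (f y) = 0 := by
  have hcrit : f' y = 0 :=
    hasDerivWithinAt_eq_zero_of_isExtrOn hy hext (hfd y (Ioo_subset_Ico_self hy))
  rw [hode y hy, riccati_rhs_eq hy] at hcrit
  exact (div_eq_zero_iff.mp hcrit).resolve_right (mul_pos hy.1 (sub_pos.mpr hy.2)).ne'

theorem stmt4_general (γ a3 : ℝ) (hγ : γ ∈ Ioo (0:ℝ) 1) (ha3 : a3 ≤ -γ)
    (f f' : ℝ → ℝ)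
    (hfc : ContinuousOn f (Icc (0:ℝ) 1))
    (hfd : ∀ y ∈ Ico (0:ℝ) 1, HasDerivWithinAt f (f' y) (Ico (0:ℝ) 1) y)
    (hbd : ∀ y ∈ Icc (0:ℝ) 1, 0 ≤ f y ∧ f y ≤ 1)
    (hf0 : f 0 = γ) (hf1 : f 1 = -γ / a3)
    (hode : ∀ y ∈ Ioo (0:ℝ) 1,
      f' y = a0 γ y + a1 γ y / (1 - y) * f y + a3 / (1 - y) * f y ^ 2) :
    (a3 < -γ → ∀ y ∈ Icc (0:ℝ) 1, f y < 1) ∧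
    (-1 ≤ a3 → ∀ y ∈ Icc (0:ℝ) 1, γ ≤ f y) := by
  obtain ⟨hγ0, hγ1⟩ := hγ
  have ha3neg : a3 < 0 := by linarith
  constructor
  · intro ha y hy
    refine (hbd y hy).2.lt_of_ne fun hy1 => ?_
    have hmax : IsMaxOn f (Icc 0 1) y := fun x hx => hy1 ▸ (hbd x hx).2
    have hy' : y ∈ Ioo (0:ℝ) 1 := by
      refine ⟨hy.1.lt_of_ne ?_, hy.2.lt_of_ne ?_⟩ <;> rintro rfl
      · linarith
      · rw [hf1, div_eq_one_iff_eq ha3neg.ne] at hy1; linarith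
    have hN := riccatiNumerator_eq_zero_of_isExtrOn hfd hode hy' hmax.isExtr
    exact (riccatiNumerator_one_neg ⟨hγ0, hγ1⟩ ha hy').ne (hy1 ▸ hN)
  · intro ha y hy
    obtain ⟨y₀, hy₀, hmin⟩ :=
      isCompact_Icc.exists_isMinOn (nonempty_Icc.mpr zero_le_one) hfc
    refine le_trans (not_lt.mp fun hlt => ?_) (hmin hy)
    have hy₀' : y₀ ∈ Ioo (0:ℝ) 1 := by
      refine ⟨hy₀.1.lt_of_ne ?_, hy₀.2.lt_of_ne ?_⟩ <;> rintro rfl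
      · linarith
      · rw [hf1, div_lt_iff_of_neg ha3neg] at hlt; nlinarith
    have hN := riccatiNumerator_eq_zero_of_isExtrOn hfd hode hy₀' hmin.isExtr
    exact (riccatiNumerator_pos_of_lt hγ0 ha hy₀' (hbd y₀ hy₀).1 hlt).ne' hN

/-- Let `γ ∈ (0,1)`, `a₃ ≤ −γ`, and let
`f ∈ C([0,1]) ∩ C¹([0,1))` with `0 ≤ f ≤ 1` solve the Riccati ODE with
`f 0 = γ` and `f 1 = −γ/a₃`. Then (i) if `a₃ < −γ`, `f < 1` on `[0,1]`, and
(ii) if `−1 ≤ a₃`, then `f ≥ γ` on `[0,1]`. -/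
theorem stmt4 (γ a3 : ℝ) (hγ : γ ∈ Ioo (0:ℝ) 1) (ha3 : a3 ≤ -γ)
    (f f' : ℝ → ℝ)
    (hfc : ContinuousOn f (Icc (0:ℝ) 1))
    (hf'c : ContinuousOn f' (Ico (0:ℝ) 1))
    (hfd : ∀ y ∈ Ico (0:ℝ) 1, HasDerivWithinAt f (f' y) (Ico (0:ℝ) 1) y)
    (hbd : ∀ y ∈ Icc (0:ℝ) 1, 0 ≤ f y ∧ f y ≤ 1)
    (hf0 : f 0 = γ) (hf1 : f 1 = -γ / a3)
    (hode : ∀ y ∈ Ioo (0:ℝ) 1,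
      f' y = a0 γ y + a1 γ y / (1 - y) * f y + a3 / (1 - y) * f y ^ 2) :
    (a3 < -γ → ∀ y ∈ Icc (0:ℝ) 1, f y < 1) ∧
    (-1 ≤ a3 → ∀ y ∈ Icc (0:ℝ) 1, γ ≤ f y) :=
  stmt4_general γ a3 hγ ha3 f f' hfc hfd hbd hf0 hf1 hode
end

section
/- Let γ ∈ (0,1), σ_D > 0, A > 1, and ξ₀ > 0, and let δ₀ ∈ (0,1/2] be such that for every ξ > 0 with |ξ − ξ₀| ≤ 1 there is a (unique) solution h_ξ ∈ C¹([0,δ₀]) of h_ξ(0) = γ and h_ξ'(y) = a₀(y) + (a₁(y)/(1−y))·h_ξ(y) + (a₂(h_ξ,y)/(1−y))·h_ξ(y)² on (0,δ₀). Then for all ξ₁, ξ₂ > 0 with |ξ₁ − ξ₀| ≤ 1 and |ξ₂ − ξ₀| ≤ 1, the inequality ξ₁ < ξ₂ implies h_{ξ₁}(y) < h_{ξ₂}(y) for all y ∈ (0,δ₀]. -/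
/-!
The difference `w = h₂ - h₁` vanishes at `0`. Near `0` the linear term of the difference equation
is `a₁(y)/(1-y) · w(y) ≈ -(1+γ) · w(y)/y → -(1+γ) w'(0)`, while the quadratic terms tend to
`(ξ₂ - ξ₁)γ²/σ_D²`; letting `y → 0` gives `(2+γ) w'(0) = (ξ₂ - ξ₁)γ²/σ_D² > 0`, so `w > 0` on
some `(0, ε]`. On `[ε, δ₀]` the coefficients are bounded, and as long as `w ≥ 0` the exponent in
`a₂` is larger for `h₂` than for `h₁`, so `a₂(h₂) ≥ a₂(h₁)` and `w' ≥ -M w`. Hence `e^{My} w(y)`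
is nondecreasing up to the first zero of `w`, which therefore does not exist.
-/

open Set Real

noncomputable def a2 (ξ σD A : ℝ) (h : ℝ → ℝ) (y : ℝ) : ℝ :=
  ξ / σD ^ 2 * Real.exp (∫ q in (0:ℝ)..y, (h q - 1) / (1 - q)) - A

open Filter Topology MeasureTheory

structure RiccatiSolution (γ σD A ξ δ : ℝ) (h h' : ℝ → ℝ) : Prop where
  continuousOn_deriv : ContinuousOn h' (Icc 0 δ)
  hasDerivWithinAt : ∀ y ∈ Icc 0 δ, HasDerivWithinAt h (h' y) (Icc 0 δ) y
  map_zero : h 0 = γ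
  ode : ∀ y ∈ Ioo 0 δ,
    h' y = a0 γ y + a1 γ y / (1 - y) * h y + a2 ξ σD A h y / (1 - y) * h y ^ 2

theorem continuousOn_a2_integrand {δ : ℝ} {h : ℝ → ℝ} (hδ : δ < 1)
    (hh : ContinuousOn h (Icc 0 δ)) :
    ContinuousOn (fun q => (h q - 1) / (1 - q)) (Icc 0 δ) :=
  (hh.sub continuousOn_const).div (continuousOn_const.sub continuousOn_id)
    fun _ hq => (sub_pos.2 (hq.2.trans_lt hδ)).ne'

theorem continuousOn_a2 {ξ σD A δ : ℝ} {h : ℝ → ℝ} (hδ : δ < 1)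
    (hh : ContinuousOn h (Icc 0 δ)) : ContinuousOn (a2 ξ σD A h) (Icc 0 δ) := by
  rcases lt_or_ge δ 0 with hδ₀ | hδ₀
  · simp [Icc_eq_empty_of_lt hδ₀]
  have hint : IntegrableOn (fun q => (h q - 1) / (1 - q)) (uIcc 0 δ) := by
    rw [uIcc_of_le hδ₀]
    exact (continuousOn_a2_integrand hδ hh).integrableOn_compact isCompact_Icc
  have hprim := intervalIntegral.continuousOn_primitive_interval hint
  rw [uIcc_of_le hδ₀] at hprim
  exact (continuousOn_const.mul (continuous_exp.comp_continuousOn hprim)).sub continuousOn_const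

theorem a2_zero (ξ σD A : ℝ) (h : ℝ → ℝ) : a2 ξ σD A h 0 = ξ / σD ^ 2 - A := by
  simp [a2]

theorem a2_le_a2 {ξ ξ' σD A y : ℝ} {h h' : ℝ → ℝ} (hξ : 0 ≤ ξ) (hξξ' : ξ ≤ ξ') (hy₀ : 0 ≤ y)
    (hy : y < 1) (hc : ContinuousOn h (Icc 0 y)) (hc' : ContinuousOn h' (Icc 0 y))
    (hle : ∀ q ∈ Icc 0 y, h q ≤ h' q) : a2 ξ σD A h y ≤ a2 ξ' σD A h' y := by
  have hint : (∫ q in (0:ℝ)..y, (h q - 1) / (1 - q)) ≤ ∫ q in (0:ℝ)..y, (h' q - 1) / (1 - q) :=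
    intervalIntegral.integral_mono_on hy₀
      ((continuousOn_a2_integrand hy hc).intervalIntegrable_of_Icc hy₀)
      ((continuousOn_a2_integrand hy hc').intervalIntegrable_of_Icc hy₀)
      fun q hq => div_le_div_of_nonneg_right (by linarith [hle q hq]) (by linarith [hq.2])
  unfold a2
  gcongr
  exact div_nonneg (hξ.trans hξξ') (sq_nonneg σD)

theorem exists_pos_on_Ioc_of_hasDerivWithinAt {w : ℝ → ℝ} {d a b : ℝ} (hab : a < b)
    (hw : HasDerivWithinAt w d (Icc a b) a) (ha : w a = 0) (hd : 0 < d) :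
    ∃ ε ∈ Ioc a b, ∀ x ∈ Ioc a ε, 0 < w x := by
  have hslope : Tendsto (slope w a) (𝓝[>] a) (𝓝 d) := by
    rw [← nhdsWithin_Ioc_eq_nhdsGT hab]
    exact (hasDerivWithinAt_iff_tendsto_slope.1 hw).mono_left
      (nhdsWithin_mono _ fun x hx => ⟨⟨hx.1.le, hx.2⟩, hx.1.ne'⟩)
  obtain ⟨u, hu, hsub⟩ := mem_nhdsGT_iff_exists_Ioc_subset.1
    ((hslope.eventually (eventually_gt_nhds hd)).and self_mem_nhdsWithin)
  refine ⟨min u b, ⟨lt_min hu hab, min_le_right _ _⟩, fun x hx => ?_⟩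
  obtain ⟨hpos, hax⟩ := hsub ⟨hx.1, hx.2.trans (min_le_left _ _)⟩
  rw [slope_def_field, ha, sub_zero] at hpos
  exact (div_pos_iff_of_pos_right (sub_pos.2 hax)).1 hpos

theorem exists_first_nonpos {w : ℝ → ℝ} {a b : ℝ} (hw : ContinuousOn w (Icc a b)) (ha : 0 < w a)
    (hx : ∃ x ∈ Icc a b, w x ≤ 0) : ∃ T ∈ Ioc a b, w T ≤ 0 ∧ ∀ t ∈ Ico a T, 0 < w t := by
  set S := Icc a b ∩ w ⁻¹' Iic 0
  have hS : IsClosed S := hw.preimage_isClosed_of_isClosed isClosed_Icc isClosed_Iic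
  have hbdd : BddBelow S := ⟨a, fun _ hx => hx.1.1⟩
  have hTS : sInf S ∈ S := hS.csInf_mem hx hbdd
  refine ⟨sInf S, ⟨hTS.1.1.lt_of_ne fun h => ?_, hTS.1.2⟩, hTS.2, fun t ht => ?_⟩
  · have hT : w (sInf S) ≤ 0 := hTS.2
    rw [← h] at hT
    linarith
  · by_contra! hwt
    exact (csInf_le hbdd ⟨⟨ht.1, ht.2.le.trans hTS.1.2⟩, hwt⟩).not_gt ht.2

theorem monotoneOn_exp_mul_of_deriv_ge {w w' : ℝ → ℝ} {a b M : ℝ}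
    (hw : ContinuousOn w (Icc a b)) (hderiv : ∀ x ∈ Ioo a b, HasDerivAt w (w' x) x)
    (hbound : ∀ x ∈ Ioo a b, -(M * w x) ≤ w' x) :
    MonotoneOn (fun x => exp (M * x) * w x) (Icc a b) := by
  refine monotoneOn_of_hasDerivWithinAt_nonneg (convex_Icc a b)
    ((continuous_exp.comp (continuous_const_mul M)).continuousOn.mul hw)
    (f' := fun x => exp (M * x) * M * w x + exp (M * x) * w' x) (fun x hx => ?_) fun x hx => ?_
  · rw [interior_Icc] at hx
    exact ((((hasDerivAt_id x).const_mul M).exp.congr_deriv (by simp)).mul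
      (hderiv x hx)).hasDerivWithinAt
  · rw [interior_Icc] at hx
    have hsum : 0 ≤ M * w x + w' x := by linarith [hbound x hx]
    calc (0:ℝ) ≤ exp (M * x) * (M * w x + w' x) := mul_nonneg (exp_pos _).le hsum
      _ = _ := by ring

theorem pos_of_deriv_ge_neg_mul {w w' : ℝ → ℝ} {a b M : ℝ} (hw : ContinuousOn w (Icc a b))
    (hderiv : ∀ x ∈ Ioo a b, HasDerivAt w (w' x) x) (ha : 0 < w a)
    (hbound : ∀ x ∈ Ioo a b, (∀ t ∈ Icc a x, 0 ≤ w t) → -(M * w x) ≤ w' x) :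
    ∀ x ∈ Icc a b, 0 < w x := by
  by_contra! hneg
  obtain ⟨T, ⟨haT, hTb⟩, hT, hpos⟩ := exists_first_nonpos hw ha hneg
  have hmono := monotoneOn_exp_mul_of_deriv_ge (hw.mono (Icc_subset_Icc_right hTb))
    (fun x hx => hderiv x ⟨hx.1, hx.2.trans_le hTb⟩)
    fun x hx => hbound x ⟨hx.1, hx.2.trans_le hTb⟩
      fun t ht => (hpos t ⟨ht.1, ht.2.trans_lt hx.2⟩).le
  have hle := hmono (left_mem_Icc.2 haT.le) (right_mem_Icc.2 haT.le) haT.le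
  have := mul_pos (exp_pos (M * a)) ha
  have := mul_nonpos_of_nonneg_of_nonpos (exp_pos (M * T)).le hT
  simp only at hle
  linarith

namespace RiccatiSolution

variable {γ σD A ξ ξ₁ ξ₂ δ : ℝ} {h h' h₁ h₁' h₂ h₂' : ℝ → ℝ}

theorem continuousOn (s : RiccatiSolution γ σD A ξ δ h h') : ContinuousOn h (Icc 0 δ) :=
  fun y hy => (s.hasDerivWithinAt y hy).continuousWithinAt

theorem hasDerivAt (s : RiccatiSolution γ σD A ξ δ h h') {y : ℝ} (hy : y ∈ Ioo 0 δ) :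
    HasDerivAt h (h' y) y :=
  (s.hasDerivWithinAt y (Ioo_subset_Icc_self hy)).hasDerivAt (Icc_mem_nhds hy.1 hy.2)

theorem sub_ode (s₁ : RiccatiSolution γ σD A ξ₁ δ h₁ h₁') (s₂ : RiccatiSolution γ σD A ξ₂ δ h₂ h₂')
    {y : ℝ} (hy : y ∈ Ioo 0 δ) :
    h₂' y - h₁' y = a1 γ y / (1 - y) * (h₂ y - h₁ y)
      + (a2 ξ₂ σD A h₂ y * h₂ y ^ 2 - a2 ξ₁ σD A h₁ y * h₁ y ^ 2) / (1 - y) := by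
  rw [s₁.ode y hy, s₂.ode y hy]
  ring

theorem two_add_mul_deriv_sub_zero (s₁ : RiccatiSolution γ σD A ξ₁ δ h₁ h₁')
    (s₂ : RiccatiSolution γ σD A ξ₂ δ h₂ h₂') (hδ : 0 < δ) (hδ1 : δ < 1) :
    (2 + γ) * (h₂' 0 - h₁' 0) = (ξ₂ - ξ₁) * γ ^ 2 / σD ^ 2 := by
  have h0 : (0:ℝ) ∈ Icc 0 δ := left_mem_Icc.2 hδ.le
  have : (𝓝[Ioo 0 δ] (0:ℝ)).NeBot := left_nhdsWithin_Ioo_neBot hδ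
  have hF : 𝓝[Ioo 0 δ] (0:ℝ) ≤ 𝓝[Icc 0 δ] 0 := nhdsWithin_mono _ Ioo_subset_Icc_self
  have hslope : Tendsto (fun y => (h₂ y - h₁ y) / y) (𝓝[Ioo 0 δ] 0) (𝓝 (h₂' 0 - h₁' 0)) := by
    refine (hasDerivWithinAt_iff_tendsto_slope.1 ((s₂.hasDerivWithinAt 0 h0).sub
      (s₁.hasDerivWithinAt 0 h0))).mono_left
      (nhdsWithin_mono _ fun y hy => ⟨Ioo_subset_Icc_self hy, hy.1.ne'⟩) |>.congr fun y => ?_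
    simp [slope_def_field, s₁.map_zero, s₂.map_zero]
  have hcoef : Tendsto (fun y => ((2 * γ + 1) * y - (1 + γ)) / (1 - y)) (𝓝[Ioo 0 δ] 0)
      (𝓝 (-(1 + γ))) := by
    have : ContinuousAt (fun y : ℝ => ((2 * γ + 1) * y - (1 + γ)) / (1 - y)) 0 := by
      fun_prop (disch := norm_num)
    simpa using this.tendsto.mono_left nhdsWithin_le_nhds
  have hquad : Tendsto
      (fun y => (a2 ξ₂ σD A h₂ y * h₂ y ^ 2 - a2 ξ₁ σD A h₁ y * h₁ y ^ 2) / (1 - y))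
      (𝓝[Ioo 0 δ] 0)
      (𝓝 ((a2 ξ₂ σD A h₂ 0 * h₂ 0 ^ 2 - a2 ξ₁ σD A h₁ 0 * h₁ 0 ^ 2) / (1 - 0))) := by
    have hnum := ((continuousOn_a2 (ξ := ξ₂) (σD := σD) (A := A) hδ1 s₂.continuousOn).mul
      (s₂.continuousOn.pow 2)).sub ((continuousOn_a2 (ξ := ξ₁) (σD := σD) (A := A) hδ1
        s₁.continuousOn).mul (s₁.continuousOn.pow 2))
    exact ((hnum 0 h0).div (continuousWithinAt_const.sub continuousWithinAt_id)
      (by norm_num)).tendsto.mono_left hF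
  have hderiv : Tendsto (fun y => h₂' y - h₁' y) (𝓝[Ioo 0 δ] 0) (𝓝 (h₂' 0 - h₁' 0)) :=
    ((s₂.continuousOn_deriv 0 h0).sub (s₁.continuousOn_deriv 0 h0)).tendsto.mono_left hF
  have hlim := tendsto_nhds_unique hderiv <| ((hcoef.mul hslope).add hquad).congr' <|
    eventually_mem_nhdsWithin.mono fun y hy => by dsimp only; rw [s₁.sub_ode s₂ hy, a1]; ring
  rw [a2_zero, a2_zero, s₁.map_zero, s₂.map_zero] at hlim
  linear_combination hlim

theorem exists_neg_mul_le_deriv_sub (s₁ : RiccatiSolution γ σD A ξ₁ δ h₁ h₁')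
    (s₂ : RiccatiSolution γ σD A ξ₂ δ h₂ h₂') (hξ₁ : 0 ≤ ξ₁) (hξ : ξ₁ ≤ ξ₂) {ε : ℝ}
    (hε : 0 < ε) (hδ1 : δ < 1) :
    ∃ M, ∀ x ∈ Ioo ε δ, (∀ t ∈ Icc 0 x, h₁ t ≤ h₂ t) →
      -(M * (h₂ x - h₁ x)) ≤ h₂' x - h₁' x := by
  have hsub : Icc ε δ ⊆ Icc 0 δ := Icc_subset_Icc_left hε.le
  have hne : ∀ y ∈ Icc ε δ, 1 - y ≠ 0 := fun y hy => (sub_pos.2 (hy.2.trans_lt hδ1)).ne'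
  have hc : ContinuousOn
      (fun y => a1 γ y / (1 - y) + a2 ξ₂ σD A h₂ y * (h₂ y + h₁ y) / (1 - y)) (Icc ε δ) := by
    refine ContinuousOn.add (ContinuousOn.div ?_ (by fun_prop) hne) (ContinuousOn.div ?_
      (by fun_prop) hne)
    · exact (by fun_prop : Continuous fun y : ℝ => (2 * γ + 1) * y - (1 + γ)).continuousOn.div
        continuousOn_id fun y hy => (hε.trans_le hy.1).ne'
    · exact ((continuousOn_a2 hδ1 s₂.continuousOn).mul
        (s₂.continuousOn.add s₁.continuousOn)).mono hsub
  obtain ⟨M, hM⟩ := isCompact_Icc.exists_bound_of_continuousOn hc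
  refine ⟨M, fun x hx hle => ?_⟩
  have hx0 : x ∈ Ioo 0 δ := ⟨hε.trans hx.1, hx.2⟩
  have hcx := neg_le_of_abs_le (hM x ⟨hx.1.le, hx.2.le⟩)
  have hw : 0 ≤ h₂ x - h₁ x := sub_nonneg.2 (hle x ⟨hx0.1.le, le_rfl⟩)
  have ha2 : a2 ξ₁ σD A h₁ x ≤ a2 ξ₂ σD A h₂ x :=
    a2_le_a2 hξ₁ hξ hx0.1.le (hx.2.trans hδ1)
      (s₁.continuousOn.mono (Icc_subset_Icc_right hx.2.le))
      (s₂.continuousOn.mono (Icc_subset_Icc_right hx.2.le)) hle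
  have hrest : 0 ≤ (a2 ξ₂ σD A h₂ x - a2 ξ₁ σD A h₁ x) * (h₁ x ^ 2 / (1 - x)) :=
    mul_nonneg (sub_nonneg.2 ha2) (div_nonneg (sq_nonneg _) (by linarith [hx.2]))
  have hsplit : h₂' x - h₁' x
      = (a1 γ x / (1 - x) + a2 ξ₂ σD A h₂ x * (h₂ x + h₁ x) / (1 - x)) * (h₂ x - h₁ x)
        + (a2 ξ₂ σD A h₂ x - a2 ξ₁ σD A h₁ x) * (h₁ x ^ 2 / (1 - x)) := by
    rw [s₁.sub_ode s₂ hx0]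
    ring
  rw [hsplit]
  linarith [mul_le_mul_of_nonneg_right hcx hw]

end RiccatiSolution

theorem stmt6_general (γ σD A δ0 : ℝ) (hγ : γ ∈ Ioo (0:ℝ) 1) (hσ : 0 < σD)
    (hδ0 : δ0 ∈ Ioc (0:ℝ) (1/2))
    (ξ1 ξ2 : ℝ) (hξ1 : 0 < ξ1)
    (h1 h1' h2 h2' : ℝ → ℝ)
    (hc1 : ContinuousOn h1' (Icc (0:ℝ) δ0))
    (hd1 : ∀ y ∈ Icc (0:ℝ) δ0, HasDerivWithinAt h1 (h1' y) (Icc (0:ℝ) δ0) y)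
    (h10 : h1 0 = γ)
    (hode1 : ∀ y ∈ Ioo (0:ℝ) δ0,
      h1' y = a0 γ y + a1 γ y / (1 - y) * h1 y + a2 ξ1 σD A h1 y / (1 - y) * h1 y ^ 2)
    (hc2 : ContinuousOn h2' (Icc (0:ℝ) δ0))
    (hd2 : ∀ y ∈ Icc (0:ℝ) δ0, HasDerivWithinAt h2 (h2' y) (Icc (0:ℝ) δ0) y)
    (h20 : h2 0 = γ)
    (hode2 : ∀ y ∈ Ioo (0:ℝ) δ0,
      h2' y = a0 γ y + a1 γ y / (1 - y) * h2 y + a2 ξ2 σD A h2 y / (1 - y) * h2 y ^ 2)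
    (hlt : ξ1 < ξ2) :
    ∀ y ∈ Ioc (0:ℝ) δ0, h1 y < h2 y := by
  obtain ⟨hδ, hδ2⟩ := hδ0
  have hδ1 : δ0 < 1 := by linarith
  have s₁ : RiccatiSolution γ σD A ξ1 δ0 h1 h1' := ⟨hc1, hd1, h10, hode1⟩
  have s₂ : RiccatiSolution γ σD A ξ2 δ0 h2 h2' := ⟨hc2, hd2, h20, hode2⟩
  have hw0 : 0 < h2' 0 - h1' 0 := by
    refine pos_of_mul_pos_right (a := 2 + γ) ?_ (by linarith [hγ.1])
    rw [s₁.two_add_mul_deriv_sub_zero s₂ hδ hδ1]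
    have := sub_pos.2 hlt
    have := hγ.1
    positivity
  have h0 : (0:ℝ) ∈ Icc 0 δ0 := left_mem_Icc.2 hδ.le
  obtain ⟨ε, ⟨hε, -⟩, hnear⟩ := exists_pos_on_Ioc_of_hasDerivWithinAt
    (w := fun y => h2 y - h1 y) hδ ((hd2 0 h0).sub (hd1 0 h0)) (by simp [h10, h20]) hw0
  obtain ⟨M, hM⟩ := s₁.exists_neg_mul_le_deriv_sub s₂ hξ1.le hlt.le hε hδ1
  have hfar : ∀ x ∈ Icc ε δ0, 0 < h2 x - h1 x := by
    refine pos_of_deriv_ge_neg_mul ((s₂.continuousOn.sub s₁.continuousOn).mono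
      (Icc_subset_Icc_left hε.le)) (fun x hx => (s₂.hasDerivAt ⟨hε.trans hx.1, hx.2⟩).sub
      (s₁.hasDerivAt ⟨hε.trans hx.1, hx.2⟩)) (hnear ε ⟨hε, le_rfl⟩)
      fun x hx hnonneg => hM x hx fun t ht => ?_
    rcases eq_or_lt_of_le ht.1 with rfl | ht0
    · rw [h10, h20]
    rcases le_or_gt t ε with htε | hεt
    · linarith [hnear t ⟨ht0, htε⟩]
    · linarith [hnonneg t ⟨hεt.le, ht.2⟩]
  intro y ⟨hy, hyδ⟩
  rcases le_or_gt y ε with hyε | hεy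
  · linarith [hnear y ⟨hy, hyε⟩]
  · linarith [hfar y ⟨hεy.le, hyδ⟩]

/-- Strict comparison in `ξ` for local solutions of the
path-dependent Riccati Cauchy problem: if `ξ₁ < ξ₂` (both positive and within
distance 1 of `ξ₀`) and `h₁, h₂` are the corresponding `C¹([0,δ₀])` solutions,
then `h₁(y) < h₂(y)` for all `y ∈ (0,δ₀]`. -/
theorem stmt6 (γ σD A ξ0 δ0 : ℝ) (hγ : γ ∈ Ioo (0:ℝ) 1) (hσ : 0 < σD)
    (hA : 1 < A) (hξ0 : 0 < ξ0) (hδ0 : δ0 ∈ Ioc (0:ℝ) (1/2))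
    (ξ1 ξ2 : ℝ) (hξ1 : 0 < ξ1) (hξ2 : 0 < ξ2)
    (hξ1near : |ξ1 - ξ0| ≤ 1) (hξ2near : |ξ2 - ξ0| ≤ 1)
    (h1 h1' h2 h2' : ℝ → ℝ)
    (hc1 : ContinuousOn h1' (Icc (0:ℝ) δ0))
    (hd1 : ∀ y ∈ Icc (0:ℝ) δ0, HasDerivWithinAt h1 (h1' y) (Icc (0:ℝ) δ0) y)
    (h10 : h1 0 = γ)
    (hode1 : ∀ y ∈ Ioo (0:ℝ) δ0,
      h1' y = a0 γ y + a1 γ y / (1 - y) * h1 y + a2 ξ1 σD A h1 y / (1 - y) * h1 y ^ 2)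
    (hc2 : ContinuousOn h2' (Icc (0:ℝ) δ0))
    (hd2 : ∀ y ∈ Icc (0:ℝ) δ0, HasDerivWithinAt h2 (h2' y) (Icc (0:ℝ) δ0) y)
    (h20 : h2 0 = γ)
    (hode2 : ∀ y ∈ Ioo (0:ℝ) δ0,
      h2' y = a0 γ y + a1 γ y / (1 - y) * h2 y + a2 ξ2 σD A h2 y / (1 - y) * h2 y ^ 2)
    (hlt : ξ1 < ξ2) :
    ∀ y ∈ Ioc (0:ℝ) δ0, h1 y < h2 y :=
  stmt6_general γ σD A δ0 hγ hσ hδ0 ξ1 ξ2 hξ1 h1 h1' h2 h2' hc1 hd1 h10 hode1 hc2 hd2 h20 hode2 hlt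
end

section
/- Let γ ∈ (0,1), σ_D > 0, A > 1, and y₀ ∈ (0,1). Then there exists ξ(y₀) ∈ (0,∞) such that for every ξ ≥ ξ(y₀), there is no function h ∈ C([0,y₀]) ∩ C¹((0,y₀)) satisfying h(0) = γ and h'(y) = a₀(y) + (a₁(y)/(1−y))·h(y) + (a₂(h,y)/(1−y))·h(y)² for all y ∈ (0,y₀); that is, every local solution of this Cauchy problem explodes at or before y₀. -/
open Set Real

/-!
A local solution stays above the level `c = γ(1 - y₀)/A`: at a first touching point the
right-hand side is positive, because `a₂ ≥ -A` and `c` is small. This lower bound makes the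
weight `exp ∫₀^y (h - 1)/(1 - q)` at least `(1 - y₀)^(1 - c)`, so for `ξ` large `a₂` is as large
as we like on `(0, y₀)`. Then the quadratic term dominates, `h' ≥ ε h²` on `(y₀/2, y₀)`, and
`1/h + ε y` is antitone there; with `ε = 2/(c y₀)` this forces `1/h(y₀) ≤ 0`.
-/

open Filter Topology

theorem HasDerivAt.eventually_lt_nhdsGT {f : ℝ → ℝ} {f' x : ℝ} (hf : HasDerivAt f f' x)
    (hf' : 0 < f') : ∀ᶠ y in 𝓝[>] x, f x < f y := by
  filter_upwards [(hasDerivAt_iff_tendsto_slope_left_right.mp hf).2.eventually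
    (eventually_gt_nhds hf'), self_mem_nhdsWithin] with y hslope hy
  exact (slope_pos_iff hy).mp hslope

theorem le_of_deriv_pos_of_eq {f f' : ℝ → ℝ} {a b c : ℝ} (hf : ContinuousOn f (Icc a b))
    (hderiv : ∀ x ∈ Ioo a b, HasDerivAt f (f' x) x) (ha : c < f a)
    (hcross : ∀ x ∈ Ioo a b, f x = c → 0 < f' x) : ∀ x ∈ Icc a b, c ≤ f x := by
  have hclosed : IsClosed ({x | c ≤ f x} ∩ Icc a b) := by
    rw [inter_comm]; exact hf.preimage_isClosed_of_isClosed isClosed_Icc isClosed_Ici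
  refine hclosed.Icc_subset_of_forall_mem_nhdsWithin ha.le ?_
  rintro x ⟨hcx : c ≤ f x, hx⟩
  rcases hcx.lt_or_eq with hlt | hcx
  · have hnear : ∀ᶠ y in 𝓝[Icc a b] x, c < f y :=
      hf x (Ico_subset_Icc_self hx) (eventually_gt_nhds hlt)
    filter_upwards [nhdsWithin_le_of_mem (Icc_mem_nhdsGT_of_mem hx) hnear] with y hy
    exact hy.le
  · have hx' : x ∈ Ioo a b := ⟨hx.1.lt_of_ne (by rintro rfl; exact ha.ne hcx), hx.2⟩
    filter_upwards [(hderiv x hx').eventually_lt_nhdsGT (hcross x hx' hcx.symm)] with y hy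
    exact hcx.trans_lt hy |>.le

theorem integral_div_one_sub (k : ℝ) {y : ℝ} (hy : y < 1) :
    ∫ q in (0:ℝ)..y, k / (1 - q) = -k * log (1 - y) := by
  simp_rw [div_eq_mul_inv]
  rw [intervalIntegral.integral_const_mul,
    intervalIntegral.integral_comp_sub_left (fun x => x⁻¹) 1, integral_inv]
  · simp [log_inv]
  · exact notMem_uIcc_of_lt (by linarith) (by norm_num)

theorem rpow_le_exp_integral {h : ℝ → ℝ} {c y : ℝ} (hy : y ∈ Ico (0:ℝ) 1)
    (hh : ContinuousOn h (Icc 0 y)) (hch : ∀ q ∈ Icc 0 y, c ≤ h q) :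
    (1 - y) ^ (1 - c) ≤ exp (∫ q in (0:ℝ)..y, (h q - 1) / (1 - q)) := by
  have hden : ∀ q ∈ Icc 0 y, 0 < 1 - q := fun q hq => by linarith [hq.2, hy.2]
  have hint : ∀ k : ℝ → ℝ, ContinuousOn k (Icc 0 y) →
      IntervalIntegrable (fun q => (k q - 1) / (1 - q)) MeasureTheory.volume 0 y := fun k hk =>
    ContinuousOn.intervalIntegrable <| by
      rw [uIcc_of_le hy.1]
      exact (hk.sub continuousOn_const).div (continuousOn_const.sub continuousOn_id)
        fun q hq => (hden q hq).ne'
  rw [rpow_def_of_pos (by linarith [hy.2]), exp_le_exp]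
  calc log (1 - y) * (1 - c) = ∫ q in (0:ℝ)..y, (c - 1) / (1 - q) := by
        rw [integral_div_one_sub _ hy.2]; ring
    _ ≤ _ := intervalIntegral.integral_mono_on hy.1 (hint _ continuousOn_const) (hint h hh)
        fun q hq => by gcongr; exacts [(hden q hq).le, hch q hq]

theorem neg_le_a2 {ξ σD A : ℝ} (h : ℝ → ℝ) (y : ℝ) (hξ : 0 ≤ ξ) : -A ≤ a2 ξ σD A h y := by
  have : 0 ≤ ξ / σD ^ 2 * exp (∫ q in (0:ℝ)..y, (h q - 1) / (1 - q)) := by positivity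
  unfold a2
  linarith

theorem mul_rpow_sub_le_a2 {ξ σD A c y y0 : ℝ} {h : ℝ → ℝ} (hξ : 0 ≤ ξ) (hy : y ∈ Icc 0 y0)
    (hy0 : y0 < 1) (hc : c ≤ 1) (hh : ContinuousOn h (Icc 0 y)) (hch : ∀ q ∈ Icc 0 y, c ≤ h q) :
    ξ / σD ^ 2 * (1 - y0) ^ (1 - c) - A ≤ a2 ξ σD A h y := by
  unfold a2
  gcongr
  calc (1 - y0) ^ (1 - c) ≤ (1 - y) ^ (1 - c) :=
        rpow_le_rpow (by linarith) (by linarith [hy.2]) (by linarith)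
    _ ≤ _ := rpow_le_exp_integral ⟨hy.1, hy.2.trans_lt hy0⟩ hh hch

theorem rhs_pos_of_barrier {γ A c t w : ℝ} (hγ : 0 < γ) (ht : t ∈ Ioo (0:ℝ) 1) (hc : 0 ≤ c)
    (hct : c < γ * (1 - t)) (hAc : A * c ≤ 2 * γ + 1) (hw : -A ≤ w) :
    0 < a0 γ t + a1 γ t / (1 - t) * c + w / (1 - t) * c ^ 2 := by
  obtain ⟨ht0, ht1⟩ := ht
  have h1t : 0 < 1 - t := sub_pos.mpr ht1
  have hnum : 0 < (1 + γ) * (γ * (1 - t) - c) + t * c * (2 * γ + 1 - A * c) := by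
    have := mul_nonneg (mul_nonneg ht0.le hc) (sub_nonneg.mpr hAc)
    nlinarith
  have hw' : -A / (1 - t) * c ^ 2 ≤ w / (1 - t) * c ^ 2 := by gcongr
  calc 0 < ((1 + γ) * (γ * (1 - t) - c) + t * c * (2 * γ + 1 - A * c)) / (t * (1 - t)) := by
        positivity
    _ = a0 γ t + a1 γ t / (1 - t) * c + -A / (1 - t) * c ^ 2 := by
        unfold a0 a1; field_simp; ring
    _ ≤ _ := by linarith

theorem mul_sq_le_rhs {γ B c ε v w y : ℝ} (hγ : 0 < γ) (hy : y ∈ Ioo (0:ℝ) 1) (hc : 0 < c)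
    (hcv : c ≤ v) (hε : 0 ≤ ε) (hB : 1 + γ ≤ B * (y * (1 - y))) (hw : B / c + ε ≤ w) :
    ε * v ^ 2 ≤ a0 γ y + a1 γ y / (1 - y) * v + w / (1 - y) * v ^ 2 := by
  obtain ⟨hy0, hy1⟩ := hy
  have h1y : 0 < 1 - y := sub_pos.mpr hy1
  have hv : 0 < v := hc.trans_le hcv
  have hB0 : 0 < B := pos_of_mul_pos_left (by linarith) (mul_pos hy0 h1y).le
  have ha0 : 0 ≤ a0 γ y := by unfold a0; positivity
  have ha1 : -B * v ≤ a1 γ y / (1 - y) * v := by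
    gcongr
    unfold a1
    rw [div_div, le_div_iff₀ (by positivity)]
    nlinarith
  have ha2 : (B / c + ε) * v ^ 2 ≤ w / (1 - y) * v ^ 2 := by
    gcongr
    exact hw.trans (le_div_self (by linarith [div_pos hB0 hc]) h1y (by linarith))
  have hBv : B * v ≤ B / c * v ^ 2 := by
    rw [div_mul_eq_mul_div, le_div_iff₀ hc]
    nlinarith [mul_le_mul_of_nonneg_left hcv (mul_pos hB0 hv).le]
  linarith

theorem mul_sub_lt_inv_of_mul_sq_le_deriv {f f' : ℝ → ℝ} {a b ε : ℝ} (hab : a ≤ b)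
    (hf : ContinuousOn f (Icc a b)) (hpos : ∀ x ∈ Icc a b, 0 < f x)
    (hderiv : ∀ x ∈ Ioo a b, HasDerivAt f (f' x) x) (hsq : ∀ x ∈ Ioo a b, ε * f x ^ 2 ≤ f' x) :
    ε * (b - a) < (f a)⁻¹ := by
  have hanti : AntitoneOn (fun x => (f x)⁻¹ + ε * x) (Icc a b) := by
    refine antitoneOn_of_hasDerivWithinAt_nonpos (f' := fun x => -f' x / f x ^ 2 + ε)
      (convex_Icc a b)
      ((hf.inv₀ fun x hx => (hpos x hx).ne').add (continuousOn_const.mul continuousOn_id)) ?_ ?_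
      <;> rw [interior_Icc] <;> intro x hx
    · exact (((hderiv x hx).inv (hpos x (Ioo_subset_Icc_self hx)).ne').add
        ((hasDerivAt_id x).const_mul ε)).hasDerivWithinAt.congr_deriv (by ring)
    · have hfx := hpos x (Ioo_subset_Icc_self hx)
      rw [neg_div, neg_add_nonpos_iff, le_div_iff₀ (by positivity)]
      exact hsq x hx
  have hmono := hanti (left_mem_Icc.2 hab) (right_mem_Icc.2 hab) hab
  have hb := inv_pos.2 (hpos b (right_mem_Icc.2 hab))
  simp only at hmono
  linarith

theorem barrier_le_of_solution {γ ξ σD A y0 : ℝ} {h h' : ℝ → ℝ} (hγ : 0 < γ) (hA : 1 < A)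
    (hy0 : y0 ∈ Ioo (0:ℝ) 1) (hξ : 0 ≤ ξ) (hcont : ContinuousOn h (Icc 0 y0))
    (hderiv : ∀ y ∈ Ioo 0 y0, HasDerivAt h (h' y) y) (h0 : h 0 = γ)
    (heq : ∀ y ∈ Ioo 0 y0,
      h' y = a0 γ y + a1 γ y / (1 - y) * h y + a2 ξ σD A h y / (1 - y) * h y ^ 2) :
    ∀ y ∈ Icc 0 y0, γ * (1 - y0) / A ≤ h y := by
  obtain ⟨hy00, hy01⟩ := hy0
  have h1y0 : 0 < 1 - y0 := sub_pos.mpr hy01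
  have hc : 0 < γ * (1 - y0) / A := by positivity
  have hcγ : γ * (1 - y0) / A < γ * (1 - y0) := div_lt_self (by positivity) hA
  have hγ0 : γ * (1 - y0) / A < h 0 := h0 ▸ hcγ.trans (show γ * (1 - y0) < γ by nlinarith)
  refine le_of_deriv_pos_of_eq hcont hderiv hγ0 fun t ht htc => ?_
  rw [heq t ht, htc]
  refine rhs_pos_of_barrier hγ ⟨ht.1, ht.2.trans hy01⟩ hc.le
    (hcγ.trans_le (by nlinarith [ht.2])) ?_ (neg_le_a2 h t hξ)
  rw [mul_div_cancel₀ _ (by positivity)]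
  nlinarith

theorem mul_sq_le_deriv_of_solution {γ ξ σD A y0 c ε : ℝ} {h h' : ℝ → ℝ} (hγ : 0 < γ)
    (hy0 : y0 ∈ Ioo (0:ℝ) 1) (hc : 0 < c) (hc1 : c ≤ 1) (hε : 0 ≤ ε) (hξ : 0 ≤ ξ)
    (hcont : ContinuousOn h (Icc 0 y0))
    (heq : ∀ y ∈ Ioo 0 y0,
      h' y = a0 γ y + a1 γ y / (1 - y) * h y + a2 ξ σD A h y / (1 - y) * h y ^ 2)
    (hlow : ∀ y ∈ Icc 0 y0, c ≤ h y)
    (hlarge : 2 * (1 + γ) / (y0 * (1 - y0)) / c + ε ≤ ξ / σD ^ 2 * (1 - y0) ^ (1 - c) - A) :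
    ∀ y ∈ Ioo (y0 / 2) y0, ε * h y ^ 2 ≤ h' y := by
  obtain ⟨hy00, hy01⟩ := hy0
  have h1y0 : 0 < 1 - y0 := sub_pos.mpr hy01
  intro y hy
  have hy' : y ∈ Ioo 0 y0 := ⟨by linarith [hy.1], hy.2⟩
  have hlow' : ∀ q ∈ Icc 0 y, c ≤ h q := fun q hq => hlow q ⟨hq.1, hq.2.trans hy.2.le⟩
  have ha2 := hlarge.trans <| mul_rpow_sub_le_a2 hξ (Ioo_subset_Icc_self hy') hy01 hc1
    (hcont.mono (Icc_subset_Icc_right hy.2.le)) hlow'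
  rw [heq y hy']
  refine mul_sq_le_rhs hγ ⟨hy'.1, hy.2.trans hy01⟩ hc (hlow y (Ioo_subset_Icc_self hy')) hε
    ?_ ha2
  calc 1 + γ = 2 * (1 + γ) / (y0 * (1 - y0)) * (y0 / 2 * (1 - y0)) := by
        field_simp [hy00.ne']
    _ ≤ 2 * (1 + γ) / (y0 * (1 - y0)) * (y * (1 - y)) := by
        gcongr <;> linarith [hy.1, hy.2]

/-- **Explosion for large `ξ`.** For each `y₀ ∈ (0,1)` there is a
threshold `ξ(y₀) > 0` such that for every `ξ ≥ ξ(y₀)` no function in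
`C([0,y₀]) ∩ C¹((0,y₀))` solves the Cauchy problem `h 0 = γ`,
`h' = a₀ + (a₁/(1−y))·h + (a₂(h,·)/(1−y))·h²` on `(0,y₀)`. -/
theorem stmt8 (γ σD A y0 : ℝ) (hγ : γ ∈ Ioo (0:ℝ) 1) (hσ : 0 < σD)
    (hA : 1 < A) (hy0 : y0 ∈ Ioo (0:ℝ) 1) :
    ∃ ξy0 : ℝ, 0 < ξy0 ∧
      ∀ ξ : ℝ, ξy0 ≤ ξ →
        ¬ ∃ h h' : ℝ → ℝ,
            ContinuousOn h (Icc (0:ℝ) y0) ∧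
            ContinuousOn h' (Ioo (0:ℝ) y0) ∧
            (∀ y ∈ Ioo (0:ℝ) y0, HasDerivAt h (h' y) y) ∧
            h 0 = γ ∧
            (∀ y ∈ Ioo (0:ℝ) y0,
              h' y = a0 γ y + a1 γ y / (1 - y) * h y +
                a2 ξ σD A h y / (1 - y) * h y ^ 2) := by
  obtain ⟨hγ0, hγ1⟩ := hγ
  obtain ⟨hy00, hy01⟩ := hy0
  have h1y0 : 0 < 1 - y0 := sub_pos.mpr hy01
  set c := γ * (1 - y0) / A
  have hc : 0 < c := by positivity
  have hc1 : c ≤ 1 := (div_le_self (by positivity) hA.le).trans (by nlinarith)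
  -- `B` bounds `-a₁(y)/(1 - y)` on `(y₀/2, y₀)`.
  set B := 2 * (1 + γ) / (y0 * (1 - y0))
  set ε := 2 / (c * y0)
  have hK : 0 < (1 - y0) ^ (1 - c) := rpow_pos_of_pos h1y0 _
  refine ⟨σD ^ 2 * (A + B / c + ε) / (1 - y0) ^ (1 - c), by positivity, fun ξ hξ => ?_⟩
  rintro ⟨h, h', hcont, -, hderiv, h0, heq⟩
  have hξ0 : 0 ≤ ξ := (by positivity : (0:ℝ) ≤ _).trans hξ
  have hlow := barrier_le_of_solution hγ0 hA ⟨hy00, hy01⟩ hξ0 hcont hderiv h0 heq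
  have hlarge : B / c + ε ≤ ξ / σD ^ 2 * (1 - y0) ^ (1 - c) - A := by
    rw [div_le_iff₀ hK] at hξ
    rw [div_mul_eq_mul_div, le_sub_iff_add_le, le_div_iff₀ (by positivity)]
    linarith
  have hy0' : y0 / 2 ≤ y0 := by linarith
  have hblow := mul_sub_lt_inv_of_mul_sq_le_deriv hy0'
    (hcont.mono (Icc_subset_Icc (by positivity) le_rfl))
    (fun y hy => hc.trans_le (hlow y ⟨by linarith [hy.1], hy.2⟩))
    (fun y hy => hderiv y ⟨by linarith [hy.1], hy.2⟩)
    (mul_sq_le_deriv_of_solution hγ0 ⟨hy00, hy01⟩ hc hc1 (by positivity) hξ0 hcont heq hlow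
      hlarge)
  have hε : ε * (y0 - y0 / 2) = c⁻¹ := by simp only [ε]; field_simp [hy00.ne']; ring
  rw [hε] at hblow
  exact hblow.not_ge (inv_anti₀ hc (hlow _ ⟨by positivity, hy0'⟩))
end

section
/- Let γ ∈ (0,1), σ_D > 0, A > 1, y₀ ∈ (0,1), and ξ̄ > 0. Then there exist constants M₁ > 0 and M₂ > 0 with the following property. For any ξ₁, ξ₂ ∈ [0, ξ̄] and any solutions h_{ξ₁}, h_{ξ₂} of the Cauchy problem h'(y) = a₀(y) + (a₁(y)/(1−y))·h(y) + (a₂(h,y)/(1−y))·h(y)² with h(0) = γ (with parameter ξ = ξ₁ and ξ = ξ₂ respectively), setting y_{ξᵢ} := min( inf{y > 0 : h_{ξᵢ}(y) = 1}, 1 ) and F_{ξᵢ}(y) := (ξᵢ/σ_D²)·exp(∫₀^y (h_{ξᵢ}(q)−1)/(1−q) dq), one has |h_{ξ₁}(y) − h_{ξ₂}(y)| ≤ M₁·y·|ξ₁ − ξ₂| and |F_{ξ₁}(y) − F_{ξ₂}(y)| ≤ M₂·|ξ₁ − ξ₂| for all y ∈ [0, min(y_{ξ₁}, y_{ξ₂},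 y₀)]. -/
/-!
The difference `u = h₁ - h₂` solves a linear equation `u' = c u + r`. Before the hitting time
`0 < h ≤ 1`, hence `0 ≤ F_ξ ≤ ξ̄/σ_D²`, and this bounds `c` from above; it is unbounded below,
as `a₁(y) ~ -(1+γ)/y` near `0`, so only a one-sided Grönwall argument on the open interval is
available. The source `r` is controlled by `|F_{ξ₁} - F_{ξ₂}|`, which is at most
`|ξ₁ - ξ₂|/σ_D² + (ξ̄/σ_D²) ∫₀^y |u|/(1-q)` because `exp` is 1-Lipschitz on `(-∞, 0]`.
Grönwall applied to `|u| + ∫₀^y |u|/(1-q)`, which vanishes at `0`, gives both estimates.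
-/

open Set Real

/-- `F_ξ(y) = (ξ/σ_D²)·exp(∫₀^y (h(q)−1)/(1−q) dq)`. -/
noncomputable def Fxi (ξ σD : ℝ) (h : ℝ → ℝ) (y : ℝ) : ℝ :=
  ξ / σD ^ 2 * Real.exp (∫ q in (0:ℝ)..y, (h q - 1) / (1 - q))

/-- `y_ξ = min( inf{y > 0 : h(y) = 1 within the domain [0,β]}, 1 )`:
the first time `h` hits the value `1`, capped at `1` (and `= 1` if `h` never
hits `1` on its domain). -/
noncomputable def yxi (h : ℝ → ℝ) (β : ℝ) : ℝ :=
  sInf (insert (1:ℝ) {y : ℝ | 0 < y ∧ y ≤ β ∧ h y = 1})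

open Filter Topology

lemma abs_exp_sub_exp_le_of_nonpos {x z : ℝ} (hx : x ≤ 0) (hz : z ≤ 0) :
    |exp x - exp z| ≤ |x - z| := by
  wlog hzx : z ≤ x generalizing x z
  · rw [abs_sub_comm, abs_sub_comm x]
    exact this hz hx (le_of_not_ge hzx)
  have hexp : exp z = exp x * exp (-(x - z)) := by rw [← exp_add]; ring_nf
  have h1 : 1 - (x - z) ≤ exp (-(x - z)) := one_sub_le_exp_neg _
  have h2 : exp (-(x - z)) ≤ 1 := exp_le_one_iff.2 (by linarith)
  have h3 : exp x ≤ 1 := exp_le_one_iff.2 hx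
  rw [abs_of_nonneg (sub_nonneg.2 (exp_le_exp.2 hzx)), abs_of_nonneg (sub_nonneg.2 hzx), hexp]
  nlinarith [exp_pos x]

lemma abs_mul_exp_sub_mul_exp_le {c₁ c₂ x₁ x₂ : ℝ} (hx₁ : x₁ ≤ 0) (hx₂ : x₂ ≤ 0) :
    |c₁ * exp x₁ - c₂ * exp x₂| ≤ |c₁ - c₂| + |c₂| * |x₁ - x₂| := by
  calc |c₁ * exp x₁ - c₂ * exp x₂| = |(c₁ - c₂) * exp x₁ + c₂ * (exp x₁ - exp x₂)| := by ring_nf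
    _ ≤ |c₁ - c₂| * exp x₁ + |c₂| * |exp x₁ - exp x₂| := by
        rw [← abs_of_pos (exp_pos x₁), ← abs_mul, ← abs_mul, abs_of_pos (exp_pos x₁)]
        exact abs_add_le _ _
    _ ≤ |c₁ - c₂| * 1 + |c₂| * |x₁ - x₂| := by
        gcongr ?_ * ?_ + _ * ?_
        · exact exp_le_one_iff.2 hx₁
        · exact abs_exp_sub_exp_le_of_nonpos hx₁ hx₂
    _ = |c₁ - c₂| + |c₂| * |x₁ - x₂| := by rw [mul_one]

lemma continuous_gronwallBound (K ε : ℝ) :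
    Continuous fun p : ℝ × ℝ => gronwallBound p.1 K ε p.2 := by
  by_cases hK : K = 0
  · simp only [gronwallBound_K0, hK]
    fun_prop
  · simp only [gronwallBound_of_K_ne_0 hK]
    fun_prop

lemma gronwallBound_zero_le {K ε x : ℝ} (hK : 0 ≤ K) (hε : 0 ≤ ε) :
    gronwallBound 0 K ε x ≤ ε * x * exp (K * x) := by
  rcases hK.eq_or_lt with rfl | hK
  · simp [gronwallBound_K0]
  simp only [gronwallBound_of_K_ne_0 hK.ne', zero_mul, zero_add]
  have h : 1 - K * x ≤ exp (-(K * x)) := one_sub_le_exp_neg _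
  have hexp : exp (-(K * x)) * exp (K * x) = 1 := by rw [← exp_add]; simp
  have key : exp (K * x) - 1 ≤ K * x * exp (K * x) := by nlinarith [exp_pos (K * x)]
  calc ε / K * (exp (K * x) - 1) ≤ ε / K * (K * x * exp (K * x)) := by gcongr
    _ = ε * x * exp (K * x) := by field_simp

theorem le_gronwallBound_of_liminf_deriv_right_le_of_Ioo {f f' : ℝ → ℝ} {K ε a b : ℝ}
    (hab : a ≤ b) (hf : ContinuousOn f (Icc a b))
    (hf' : ∀ x ∈ Ioo a b, ∀ r, f' x < r → ∃ᶠ z in 𝓝[>] x, (z - x)⁻¹ * (f z - f x) < r)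
    (bound : ∀ x ∈ Ioo a b, f' x ≤ K * f x + ε) :
    f b ≤ gronwallBound (f a) K ε (b - a) := by
  rcases hab.eq_or_lt with rfl | hab
  · rw [sub_self, gronwallBound_x0]
  have hshift : ∀ a' ∈ Ioo a b, f b ≤ gronwallBound (f a') K ε (b - a') := fun a' ha' =>
    le_gronwallBound_of_liminf_deriv_right_le (hf.mono (Icc_subset_Icc_left ha'.1.le))
      (fun x hx => hf' x ⟨ha'.1.trans_le hx.1, hx.2⟩) le_rfl
      (fun x hx => bound x ⟨ha'.1.trans_le hx.1, hx.2⟩) b ⟨ha'.2.le, le_rfl⟩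
  have hlim : Tendsto (fun a' => gronwallBound (f a') K ε (b - a')) (𝓝[Ioo a b] a)
      (𝓝 (gronwallBound (f a) K ε (b - a))) := by
    refine (continuous_gronwallBound K ε).continuousAt.tendsto.comp (Tendsto.prodMk_nhds ?_ ?_)
    · exact (hf a (left_mem_Icc.2 hab.le)).mono Ioo_subset_Icc_self
    · exact ((continuous_const.sub continuous_id).tendsto a).mono_left nhdsWithin_le_nhds
  have : (𝓝[Ioo a b] a).NeBot := left_nhdsWithin_Ioo_neBot hab
  exact ge_of_tendsto hlim (eventually_mem_nhdsWithin.mono hshift)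

lemma eventually_slope_abs_lt {u : ℝ → ℝ} {u' t c r : ℝ}
    (hu : HasDerivWithinAt u u' (Ici t) t) (hr : c * |u t| + |u' - c * u t| < r) :
    ∀ᶠ z in 𝓝[>] t, slope (fun s => |u s|) t z < r := by
  have hslope {f : ℝ → ℝ} {f' : ℝ} (hf : HasDerivWithinAt f f' (Ici t) t) :
      Tendsto (slope f t) (𝓝[>] t) (𝓝 f') :=
    (hasDerivWithinAt_iff_tendsto_slope' self_notMem_Ioi).1 hf.Ioi_of_Ici
  rcases lt_trichotomy (u t) 0 with hneg | h0 | hpos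
  · refine (hslope ((hasDerivAt_abs_neg hneg).comp_hasDerivWithinAt t hu)).eventually_lt_const ?_
    rw [abs_of_neg hneg] at hr
    linarith [neg_abs_le (u' - c * u t)]
  · simp only [h0, abs_zero, mul_zero, zero_add, sub_zero] at hr
    filter_upwards [(hslope hu).abs.eventually_lt_const hr, self_mem_nhdsWithin] with z hz hzt
    rw [slope_def_field, h0, sub_zero, abs_div, abs_of_pos (sub_pos.2 hzt)] at hz
    rwa [slope_def_field, h0, abs_zero, sub_zero]
  · refine (hslope ((hasDerivAt_abs_pos hpos).comp_hasDerivWithinAt t hu)).eventually_lt_const ?_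
    rw [abs_of_pos hpos] at hr
    linarith [le_abs_self (u' - c * u t)]

theorem abs_add_integral_le_gronwallBound {u u' c w : ℝ → ℝ} {K ε a b : ℝ} (hab : a ≤ b)
    (hu : ContinuousOn u (Icc a b)) (hu' : ∀ t ∈ Ioo a b, HasDerivWithinAt u (u' t) (Ici t) t)
    (hw : ContinuousOn w (Icc a b))
    (bound : ∀ t ∈ Ioo a b,
      c t * |u t| + |u' t - c t * u t| + w t ≤ K * (|u t| + ∫ s in a..t, w s) + ε) :
    |u b| + ∫ s in a..b, w s ≤ gronwallBound |u a| K ε (b - a) := by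
  have hW : ContinuousOn (fun t => ∫ s in a..t, w s) (Icc a b) := by
    simpa only [uIcc_of_le hab] using intervalIntegral.continuousOn_primitive_interval
      (hw.integrableOn_Icc.mono_set (uIcc_of_le hab).subset)
  have hW' : ∀ t ∈ Ioo a b, HasDerivAt (fun t => ∫ s in a..t, w s) (w t) t := fun t ht =>
    intervalIntegral.integral_hasDerivAt_right
      ((hw.mono (Icc_subset_Icc_right ht.2.le)).intervalIntegrable_of_Icc ht.1.le)
      ((hw.mono Ioo_subset_Icc_self).stronglyMeasurableAtFilter isOpen_Ioo t ht)
      (hw.continuousAt (Icc_mem_nhds ht.1 ht.2))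
  have key := le_gronwallBound_of_liminf_deriv_right_le_of_Ioo
    (f := fun t => |u t| + ∫ s in a..t, w s)
    (f' := fun t => c t * |u t| + |u' t - c t * u t| + w t) hab (hu.abs.add hW) ?_ bound
  · simpa only [intervalIntegral.integral_same, add_zero] using key
  intro t ht r hr
  have hδ := half_pos (sub_pos.2 hr)
  have habs := eventually_slope_abs_lt (c := c t) (hu' t ht) (lt_add_of_pos_right _ hδ)
  have hint := ((hasDerivWithinAt_iff_tendsto_slope' self_notMem_Ioi).1
    (hW' t ht).hasDerivWithinAt).eventually_lt_const (lt_add_of_pos_right (w t) hδ)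
  refine (habs.and hint).frequently.mono fun z hz => ?_
  simp only [slope_def_field] at hz
  calc (z - t)⁻¹ * (|u z| + (∫ s in a..z, w s) - (|u t| + ∫ s in a..t, w s))
      = (|u z| - |u t|) / (z - t) + ((∫ s in a..z, w s) - ∫ s in a..t, w s) / (z - t) := by ring
    _ < r := by linarith [hz.1, hz.2]

theorem pos_of_deriv_pos_of_eq_zero {f f' : ℝ → ℝ} {a b : ℝ}
    (hf : ∀ x ∈ Icc a b, HasDerivWithinAt f (f' x) (Icc a b) x) (ha : 0 < f a)
    (hzero : ∀ x ∈ Ioo a b, f x = 0 → 0 < f' x) : ∀ x ∈ Ico a b, 0 < f x := by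
  intro x hx
  by_contra! hfx
  have hc : ContinuousOn f (Icc a x) := fun z hz =>
    (hf z ⟨hz.1, hz.2.trans hx.2.le⟩).continuousWithinAt.mono (Icc_subset_Icc_right hx.2.le)
  have hS : IsClosed (Icc a x ∩ f ⁻¹' Iic 0) :=
    hc.preimage_isClosed_of_isClosed isClosed_Icc isClosed_Iic
  have hbdd : BddBelow (Icc a x ∩ f ⁻¹' Iic 0) := ⟨a, fun z hz => hz.1.1⟩
  set s := sInf (Icc a x ∩ f ⁻¹' Iic 0)
  have hs : s ∈ Icc a x ∩ f ⁻¹' Iic 0 := hS.csInf_mem ⟨x, ⟨hx.1, le_rfl⟩, hfx⟩ hbdd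
  have hpos : ∀ z ∈ Ioo a s, 0 < f z := fun z hz => by
    by_contra! hfz
    exact (csInf_le hbdd ⟨⟨hz.1.le, hz.2.le.trans hs.1.2⟩, hfz⟩).not_gt hz.2
  have has : a < s := hs.1.1.lt_of_ne fun h => (h ▸ hs.2 : f a ≤ 0).not_gt ha
  have hsb : s < b := hs.1.2.trans_lt hx.2
  have hderiv : HasDerivAt f (f' s) s := (hf s ⟨has.le, hsb.le⟩).hasDerivAt (Icc_mem_nhds has hsb)
  have hleft : ∀ᶠ z in 𝓝[<] s, z ∈ Ioo a s := Ioo_mem_nhdsLT has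
  have hfs : f s = 0 := le_antisymm hs.2 <|
    ge_of_tendsto (hderiv.continuousAt.tendsto.mono_left nhdsWithin_le_nhds)
      (hleft.mono fun z hz => (hpos z hz).le)
  have hslope := ((hasDerivWithinAt_iff_tendsto_slope' self_notMem_Iio).1
    hderiv.hasDerivWithinAt).eventually_const_lt (hzero s ⟨has, hsb⟩ hfs)
  obtain ⟨z, hz, hzs⟩ := (hslope.and hleft).exists
  rw [slope_def_field, hfs, sub_zero] at hz
  exact (div_neg_of_pos_of_neg (hpos z hzs) (sub_neg.2 hzs.2)).not_gt hz

theorem le_one_of_le_yxi {h : ℝ → ℝ} {β t : ℝ} (hc : ContinuousOn h (Icc 0 β)) (h0 : h 0 < 1)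
    (ht : 0 ≤ t) (htβ : t ≤ β) (hty : t ≤ yxi h β) : h t ≤ 1 := by
  by_contra! h1
  obtain ⟨z, hz, hz1⟩ := intermediate_value_Icc ht (hc.mono (Icc_subset_Icc_right htβ))
    ⟨h0.le, h1.le⟩
  have hz0 : 0 < z := hz.1.lt_of_ne fun hz0 => (hz0 ▸ hz1 : h 0 = 1).not_lt h0
  have hbdd : BddBelow (insert (1:ℝ) {y : ℝ | 0 < y ∧ y ≤ β ∧ h y = 1}) := by
    refine ⟨0, ?_⟩
    rintro y (rfl | ⟨hy, -⟩)
    exacts [zero_le_one, hy.le]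
  have hyz : yxi h β ≤ z := csInf_le hbdd (Or.inr ⟨hz0, hz.2.trans htβ, hz1⟩)
  rw [le_antisymm hz.2 (hty.trans hyz)] at hz1
  exact h1.ne' hz1

def IsCauchySolution (γ σD A ξ β : ℝ) (h h' : ℝ → ℝ) : Prop :=
  (∀ y ∈ Icc (0:ℝ) β, HasDerivWithinAt h (h' y) (Icc (0:ℝ) β) y) ∧ h 0 = γ ∧
    ∀ y ∈ Ioo (0:ℝ) β,
      h' y = a0 γ y + a1 γ y / (1 - y) * h y + a2 ξ σD A h y / (1 - y) * h y ^ 2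

lemma riccati_sub {a₀ a₁ s A F₁ F₂ x₁ x₂ d₁ d₂ : ℝ}
    (h₁ : d₁ = a₀ + a₁ / s * x₁ + (F₁ - A) / s * x₁ ^ 2)
    (h₂ : d₂ = a₀ + a₁ / s * x₂ + (F₂ - A) / s * x₂ ^ 2) :
    d₁ - d₂ - (a₁ + (F₁ - A) * (x₁ + x₂)) / s * (x₁ - x₂) = (F₁ - F₂) * x₂ ^ 2 / s := by
  subst h₁ h₂
  ring

lemma a1_le {γ t : ℝ} (hγ : 0 < γ) (ht : 0 < t) : a1 γ t ≤ 2 * γ + 1 := by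
  rw [a1, div_le_iff₀ ht]
  nlinarith

lemma riccati_coeff_le {γ t ρ κ A F x₁ x₂ : ℝ} (hγ : 0 < γ) (ht : 0 < t) (ht1 : t < 1)
    (hρ : (1 - t)⁻¹ ≤ ρ) (hA : 0 ≤ A) (hF : F ∈ Icc 0 κ) (hx₁ : x₁ ∈ Icc (0:ℝ) 1)
    (hx₂ : x₂ ∈ Icc (0:ℝ) 1) :
    (a1 γ t + (F - A) * (x₁ + x₂)) / (1 - t) ≤ (2 * γ + 1 + 2 * κ) * ρ := by
  have hnum : a1 γ t + (F - A) * (x₁ + x₂) ≤ 2 * γ + 1 + 2 * κ := by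
    have : (F - A) * (x₁ + x₂) ≤ κ * 2 := by
      nlinarith [hF.1, hF.2, hx₁.1, hx₁.2, hx₂.1, hx₂.2]
    linarith [a1_le hγ ht]
  rw [div_eq_mul_inv]
  calc (a1 γ t + (F - A) * (x₁ + x₂)) * (1 - t)⁻¹ ≤ (2 * γ + 1 + 2 * κ) * (1 - t)⁻¹ := by
        gcongr
    _ ≤ (2 * γ + 1 + 2 * κ) * ρ := by
        gcongr
        linarith [hF.1.trans hF.2]

lemma abs_mul_sq_div_one_sub_le {F x t ρ : ℝ} (hx : x ∈ Icc (0:ℝ) 1) (ht : t < 1)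
    (hρ : (1 - t)⁻¹ ≤ ρ) : |F * x ^ 2 / (1 - t)| ≤ |F| * ρ := by
  rw [abs_div, abs_mul, abs_of_pos (sub_pos.2 ht), abs_of_nonneg (sq_nonneg x), div_eq_mul_inv]
  calc |F| * x ^ 2 * (1 - t)⁻¹ ≤ |F| * 1 * ρ := by
        gcongr
        exact pow_le_one₀ hx.1 hx.2
    _ = |F| * ρ := by rw [mul_one]

lemma integral_div_one_sub_nonpos {h : ℝ → ℝ} {t : ℝ} (ht : 0 ≤ t) (ht1 : t < 1)
    (hle : ∀ q ∈ Icc 0 t, h q ≤ 1) : ∫ q in (0:ℝ)..t, (h q - 1) / (1 - q) ≤ 0 := by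
  rw [← neg_nonneg, ← intervalIntegral.integral_neg]
  refine intervalIntegral.integral_nonneg ht fun q hq => ?_
  rw [← neg_div]
  exact div_nonneg (by linarith [hle q hq]) (by linarith [hq.2])

lemma Fxi_mem_Icc {ξ ξbar σD t : ℝ} {h : ℝ → ℝ} (hξ : ξ ∈ Icc 0 ξbar) (ht : 0 ≤ t) (ht1 : t < 1)
    (hle : ∀ q ∈ Icc 0 t, h q ≤ 1) : Fxi ξ σD h t ∈ Icc 0 (ξbar / σD ^ 2) := by
  have hexp : exp (∫ q in (0:ℝ)..t, (h q - 1) / (1 - q)) ≤ 1 :=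
    exp_le_one_iff.2 (integral_div_one_sub_nonpos ht ht1 hle)
  refine ⟨by unfold Fxi; have := hξ.1; positivity, ?_⟩
  have hξbar : 0 ≤ ξbar / σD ^ 2 := by have := hξ.1.trans hξ.2; positivity
  calc Fxi ξ σD h t ≤ ξbar / σD ^ 2 * 1 := by
        unfold Fxi
        gcongr
        exact hξ.2
    _ = ξbar / σD ^ 2 := mul_one _

lemma abs_Fxi_sub_Fxi_le {ξ₁ ξ₂ ξbar σD t : ℝ} {h₁ h₂ : ℝ → ℝ} (hξ₂ : ξ₂ ∈ Icc 0 ξbar)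
    (ht : 0 ≤ t) (ht1 : t < 1) (hc₁ : ContinuousOn h₁ (Icc 0 t)) (hc₂ : ContinuousOn h₂ (Icc 0 t))
    (hle₁ : ∀ q ∈ Icc 0 t, h₁ q ≤ 1) (hle₂ : ∀ q ∈ Icc 0 t, h₂ q ≤ 1) :
    |Fxi ξ₁ σD h₁ t - Fxi ξ₂ σD h₂ t| ≤
      |ξ₁ - ξ₂| / σD ^ 2 + ξbar / σD ^ 2 * ∫ q in (0:ℝ)..t, |h₁ q - h₂ q| / (1 - q) := by
  have hne : ∀ q ∈ Icc 0 t, 1 - q ≠ 0 := fun q hq => by linarith [hq.2]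
  have hint {h : ℝ → ℝ} (hc : ContinuousOn h (Icc 0 t)) :
      IntervalIntegrable (fun q => (h q - 1) / (1 - q)) MeasureTheory.volume 0 t :=
    ((hc.sub continuousOn_const).div (by fun_prop) hne).intervalIntegrable_of_Icc ht
  have hdiff : (∫ q in (0:ℝ)..t, (h₁ q - 1) / (1 - q)) - ∫ q in (0:ℝ)..t, (h₂ q - 1) / (1 - q) =
      ∫ q in (0:ℝ)..t, (h₁ q - h₂ q) / (1 - q) := by
    rw [← intervalIntegral.integral_sub (hint hc₁) (hint hc₂)]
    congr 1 with q
    ring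
  have habs : |(∫ q in (0:ℝ)..t, (h₁ q - h₂ q) / (1 - q))| ≤
      ∫ q in (0:ℝ)..t, |h₁ q - h₂ q| / (1 - q) := by
    refine (intervalIntegral.abs_integral_le_integral_abs ht).trans_eq
      (intervalIntegral.integral_congr fun q hq => ?_)
    rw [uIcc_of_le ht] at hq
    simp only [abs_div, abs_of_pos (show 0 < 1 - q by linarith [hq.2])]
  refine (abs_mul_exp_sub_mul_exp_le (integral_div_one_sub_nonpos ht ht1 hle₁)
    (integral_div_one_sub_nonpos ht ht1 hle₂)).trans ?_
  have hξbar : 0 ≤ ξbar / σD ^ 2 := by have := hξ₂.1.trans hξ₂.2; positivity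
  rw [hdiff, ← sub_div, abs_div, abs_div, abs_of_nonneg (sq_nonneg σD), abs_of_nonneg hξ₂.1]
  gcongr
  exact hξ₂.2

namespace IsCauchySolution

variable {γ σD A ξ β : ℝ} {h h' : ℝ → ℝ}

lemma continuousOn (H : IsCauchySolution γ σD A ξ β h h') : ContinuousOn h (Icc 0 β) :=
  fun y hy => (H.1 y hy).continuousWithinAt

/-- At a zero of `h` the equation reduces to `h' = a₀ > 0`. -/
lemma pos (H : IsCauchySolution γ σD A ξ β h h') (hγ : 0 < γ) : ∀ t ∈ Ico 0 β, 0 < h t :=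
  pos_of_deriv_pos_of_eq_zero H.1 (H.2.1 ▸ hγ) fun t ht ht0 => by
    have := ht.1
    rw [H.2.2 t ht, ht0, zero_pow two_ne_zero, mul_zero, mul_zero, add_zero, add_zero, a0]
    positivity

lemma hasDerivAt (H : IsCauchySolution γ σD A ξ β h h') {t : ℝ} (ht : t ∈ Ioo 0 β) :
    HasDerivAt h (h' t) t :=
  (H.1 t (Ioo_subset_Icc_self ht)).hasDerivAt (Icc_mem_nhds ht.1 ht.2)

lemma le_one (H : IsCauchySolution γ σD A ξ β h h') (hγ : γ < 1) {y : ℝ} (hyβ : y ≤ β)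
    (hy : y ≤ yxi h β) : ∀ t ∈ Icc 0 y, h t ≤ 1 := fun _ ht =>
  le_one_of_le_yxi H.continuousOn (H.2.1 ▸ hγ) ht.1 (ht.2.trans hyβ) (ht.2.trans hy)

lemma mem_Icc (H : IsCauchySolution γ σD A ξ β h h') (hγ : γ ∈ Ioo 0 1) {t : ℝ} (ht : 0 ≤ t)
    (htβ : t < β) (hty : t ≤ yxi h β) : h t ∈ Icc 0 1 :=
  ⟨(H.pos hγ.1 t ⟨ht, htβ⟩).le, H.le_one hγ.2 htβ.le hty t ⟨ht, le_rfl⟩⟩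

end IsCauchySolution

section Lipschitz

variable {γ σD A ξbar ρ ξ₁ ξ₂ β₁ β₂ : ℝ} {h₁ h₁' h₂ h₂' : ℝ → ℝ}

/-- The coefficient `c` of the linear equation `u' = c u + r` satisfied by `u = h₁ - h₂`. -/
noncomputable def diffCoeff (γ σD A ξ : ℝ) (h₁ h₂ : ℝ → ℝ) (t : ℝ) : ℝ :=
  (a1 γ t + a2 ξ σD A h₁ t * (h₁ t + h₂ t)) / (1 - t)

theorem IsCauchySolution.diff_rate_le (H₁ : IsCauchySolution γ σD A ξ₁ β₁ h₁ h₁')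
    (H₂ : IsCauchySolution γ σD A ξ₂ β₂ h₂ h₂') (hγ : γ ∈ Ioo 0 1) (hA : 0 ≤ A)
    (hξ₁ : ξ₁ ∈ Icc 0 ξbar) (hξ₂ : ξ₂ ∈ Icc 0 ξbar) {t : ℝ} (ht : 0 < t) (ht1 : t < 1)
    (hρ : (1 - t)⁻¹ ≤ ρ) (htβ₁ : t < β₁) (htβ₂ : t < β₂) (ht₁ : t ≤ yxi h₁ β₁)
    (ht₂ : t ≤ yxi h₂ β₂) :
    diffCoeff γ σD A ξ₁ h₁ h₂ t * |h₁ t - h₂ t| +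
        |h₁' t - h₂' t - diffCoeff γ σD A ξ₁ h₁ h₂ t * (h₁ t - h₂ t)| + |h₁ t - h₂ t| / (1 - t) ≤
      (2 * γ + 2 + 3 * (ξbar / σD ^ 2)) * ρ *
          (|h₁ t - h₂ t| + ∫ s in (0:ℝ)..t, |h₁ s - h₂ s| / (1 - s)) +
        ρ * (|ξ₁ - ξ₂| / σD ^ 2) := by
  set κ := ξbar / σD ^ 2
  have hκ : 0 ≤ κ := by have := hξ₁.1.trans hξ₁.2; positivity
  have hρ0 : 0 ≤ ρ := (inv_nonneg.2 (sub_nonneg.2 ht1.le)).trans hρ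
  have hle₁ := H₁.le_one hγ.2 htβ₁.le ht₁
  have hle₂ := H₂.le_one hγ.2 htβ₂.le ht₂
  have hx₂ := H₂.mem_Icc hγ ht.le htβ₂ ht₂
  have hcoef : diffCoeff γ σD A ξ₁ h₁ h₂ t ≤ (2 * γ + 1 + 2 * κ) * ρ :=
    riccati_coeff_le hγ.1 ht ht1 hρ hA (Fxi_mem_Icc hξ₁ ht.le ht1 hle₁)
      (H₁.mem_Icc hγ ht.le htβ₁ ht₁) hx₂
  have hF := abs_Fxi_sub_Fxi_le (ξ₁ := ξ₁) (σD := σD) hξ₂ ht.le ht1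
    (H₁.continuousOn.mono (Icc_subset_Icc_right htβ₁.le))
    (H₂.continuousOn.mono (Icc_subset_Icc_right htβ₂.le)) hle₁ hle₂
  have hr : h₁' t - h₂' t - diffCoeff γ σD A ξ₁ h₁ h₂ t * (h₁ t - h₂ t) =
      (Fxi ξ₁ σD h₁ t - Fxi ξ₂ σD h₂ t) * h₂ t ^ 2 / (1 - t) :=
    riccati_sub (H₁.2.2 t ⟨ht, htβ₁⟩) (H₂.2.2 t ⟨ht, htβ₂⟩)
  have hw : |h₁ t - h₂ t| / (1 - t) ≤ ρ * |h₁ t - h₂ t| := by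
    rw [div_eq_inv_mul]
    exact mul_le_mul_of_nonneg_right hρ (abs_nonneg _)
  have hG : 0 ≤ ∫ s in (0:ℝ)..t, |h₁ s - h₂ s| / (1 - s) :=
    intervalIntegral.integral_nonneg ht.le fun q hq =>
      div_nonneg (abs_nonneg _) (by linarith [hq.2])
  rw [hr]
  nlinarith [abs_mul_sq_div_one_sub_le (F := Fxi ξ₁ σD h₁ t - Fxi ξ₂ σD h₂ t) hx₂ ht1 hρ,
    mul_le_mul_of_nonneg_right hcoef (abs_nonneg (h₁ t - h₂ t)),
    mul_le_mul_of_nonneg_right hF hρ0, mul_nonneg (mul_nonneg hκ hρ0) (abs_nonneg (h₁ t - h₂ t)),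
    mul_nonneg (mul_nonneg (by linarith [hγ.1] : 0 ≤ 2 * γ + 2 + 2 * κ) hρ0) hG]

theorem IsCauchySolution.abs_sub_add_integral_le (H₁ : IsCauchySolution γ σD A ξ₁ β₁ h₁ h₁')
    (H₂ : IsCauchySolution γ σD A ξ₂ β₂ h₂ h₂') (hγ : γ ∈ Ioo 0 1) (hA : 0 ≤ A)
    (hξ₁ : ξ₁ ∈ Icc 0 ξbar) (hξ₂ : ξ₂ ∈ Icc 0 ξbar) {y : ℝ} (hy : 0 ≤ y) (hy1 : y < 1)
    (hρ : (1 - y)⁻¹ ≤ ρ) (hyβ₁ : y ≤ β₁) (hyβ₂ : y ≤ β₂) (hy₁ : y ≤ yxi h₁ β₁)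
    (hy₂ : y ≤ yxi h₂ β₂) :
    |h₁ y - h₂ y| + ∫ q in (0:ℝ)..y, |h₁ q - h₂ q| / (1 - q) ≤
      ρ * exp ((2 * γ + 2 + 3 * (ξbar / σD ^ 2)) * ρ) / σD ^ 2 * y * |ξ₁ - ξ₂| := by
  set K := (2 * γ + 2 + 3 * (ξbar / σD ^ 2)) * ρ
  have hρ0 : 0 ≤ ρ := (inv_nonneg.2 (sub_nonneg.2 hy1.le)).trans hρ
  have hK : 0 ≤ K := by have := hγ.1; have := hξ₁.1.trans hξ₁.2; positivity
  have hc₁ := H₁.continuousOn.mono (Icc_subset_Icc_right hyβ₁)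
  have hc₂ := H₂.continuousOn.mono (Icc_subset_Icc_right hyβ₂)
  have key := abs_add_integral_le_gronwallBound (u := fun t => h₁ t - h₂ t)
    (u' := fun t => h₁' t - h₂' t) (c := diffCoeff γ σD A ξ₁ h₁ h₂)
    (w := fun q => |h₁ q - h₂ q| / (1 - q)) (K := K) (ε := ρ * (|ξ₁ - ξ₂| / σD ^ 2)) hy
    (hc₁.sub hc₂)
    (fun t ht => ((H₁.hasDerivAt ⟨ht.1, ht.2.trans_le hyβ₁⟩).sub
      (H₂.hasDerivAt ⟨ht.1, ht.2.trans_le hyβ₂⟩)).hasDerivWithinAt)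
    ((hc₁.sub hc₂).abs.div (by fun_prop) fun t ht => by linarith [ht.2])
    (fun t ht => H₁.diff_rate_le H₂ hγ hA hξ₁ hξ₂ ht.1 (ht.2.trans hy1)
      ((inv_anti₀ (sub_pos.2 hy1) (by linarith [ht.2])).trans hρ) (ht.2.trans_le hyβ₁)
      (ht.2.trans_le hyβ₂) (ht.2.le.trans hy₁) (ht.2.le.trans hy₂))
  rw [H₁.2.1, H₂.2.1, sub_self, abs_zero, sub_zero] at key
  calc _ ≤ ρ * (|ξ₁ - ξ₂| / σD ^ 2) * y * exp (K * y) :=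
        key.trans (gronwallBound_zero_le hK (by positivity))
    _ ≤ ρ * (|ξ₁ - ξ₂| / σD ^ 2) * y * exp K := by
        gcongr
        exact mul_le_of_le_one_right hK hy1.le
    _ = ρ * exp K / σD ^ 2 * y * |ξ₁ - ξ₂| := by ring

end Lipschitz

/-- **Lipschitz estimates in `ξ`.** There are constants
`M₁, M₂ > 0` (depending only on `γ, σ_D, A, y₀, ξ̄`) such that for any
`ξ₁, ξ₂ ∈ [0, ξ̄]` and any `C¹` solutions `h₁, h₂` (defined on `[0,β₁]`,
`[0,β₂]` respectively) of the Cauchy problem with parameters `ξ₁, ξ₂`, one has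
`|h₁(y) − h₂(y)| ≤ M₁·y·|ξ₁ − ξ₂|` and `|F_{ξ₁}(y) − F_{ξ₂}(y)| ≤ M₂·|ξ₁ − ξ₂|`
for all `y` up to `min(y_{ξ₁}, y_{ξ₂}, y₀)` (within both domains). -/
theorem stmt9 (γ σD A y0 ξbar : ℝ) (hγ : γ ∈ Ioo (0:ℝ) 1) (hσ : 0 < σD)
    (hA : 1 < A) (hy0 : y0 ∈ Ioo (0:ℝ) 1) (hξbar : 0 < ξbar) :
    ∃ M1 M2 : ℝ, 0 < M1 ∧ 0 < M2 ∧
      ∀ ξ1 ξ2 : ℝ, ξ1 ∈ Icc (0:ℝ) ξbar → ξ2 ∈ Icc (0:ℝ) ξbar →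
      ∀ β1 β2 : ℝ, β1 ∈ Ioc (0:ℝ) 1 → β2 ∈ Ioc (0:ℝ) 1 →
      ∀ h1 h1' h2 h2' : ℝ → ℝ,
        (ContinuousOn h1' (Icc (0:ℝ) β1) ∧
          (∀ y ∈ Icc (0:ℝ) β1, HasDerivWithinAt h1 (h1' y) (Icc (0:ℝ) β1) y) ∧
          h1 0 = γ ∧
          (∀ y ∈ Ioo (0:ℝ) β1,
            h1' y = a0 γ y + a1 γ y / (1 - y) * h1 y +
              a2 ξ1 σD A h1 y / (1 - y) * h1 y ^ 2)) →
        (ContinuousOn h2' (Icc (0:ℝ) β2) ∧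
          (∀ y ∈ Icc (0:ℝ) β2, HasDerivWithinAt h2 (h2' y) (Icc (0:ℝ) β2) y) ∧
          h2 0 = γ ∧
          (∀ y ∈ Ioo (0:ℝ) β2,
            h2' y = a0 γ y + a1 γ y / (1 - y) * h2 y +
              a2 ξ2 σD A h2 y / (1 - y) * h2 y ^ 2)) →
        ∀ y ∈ Icc (0:ℝ)
            (min (min (yxi h1 β1) (yxi h2 β2)) (min y0 (min β1 β2))),
          |h1 y - h2 y| ≤ M1 * y * |ξ1 - ξ2| ∧
          |Fxi ξ1 σD h1 y - Fxi ξ2 σD h2 y| ≤ M2 * |ξ1 - ξ2| := by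
  set ρ := (1 - y0)⁻¹
  set M₁ := ρ * exp ((2 * γ + 2 + 3 * (ξbar / σD ^ 2)) * ρ) / σD ^ 2
  have hM₁ : 0 < M₁ := by have := inv_pos.2 (sub_pos.2 hy0.2); positivity
  refine ⟨M₁, 1 / σD ^ 2 + ξbar / σD ^ 2 * M₁, hM₁, by positivity, ?_⟩
  rintro ξ₁ ξ₂ hξ₁ hξ₂ β₁ β₂ - - h₁ h₁' h₂ h₂' ⟨-, (H₁ : IsCauchySolution γ σD A ξ₁ β₁ h₁ h₁')⟩
    ⟨-, (H₂ : IsCauchySolution γ σD A ξ₂ β₂ h₂ h₂')⟩ y ⟨hy, hyY⟩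
  simp only [le_min_iff] at hyY
  obtain ⟨⟨hy₁, hy₂⟩, hyy0, hyβ₁, hyβ₂⟩ := hyY
  have hy1 : y < 1 := hyy0.trans_lt hy0.2
  have hest : |h₁ y - h₂ y| + ∫ q in (0:ℝ)..y, |h₁ q - h₂ q| / (1 - q) ≤ M₁ * y * |ξ₁ - ξ₂| :=
    H₁.abs_sub_add_integral_le H₂ hγ (by linarith) hξ₁ hξ₂ hy hy1
      (inv_anti₀ (sub_pos.2 hy0.2) (by linarith)) hyβ₁ hyβ₂ hy₁ hy₂
  have hy1M : M₁ * y * |ξ₁ - ξ₂| ≤ M₁ * |ξ₁ - ξ₂| :=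
    mul_le_mul_of_nonneg_right (mul_le_of_le_one_right hM₁.le hy1.le) (abs_nonneg _)
  have hW : 0 ≤ ∫ q in (0:ℝ)..y, |h₁ q - h₂ q| / (1 - q) :=
    intervalIntegral.integral_nonneg hy fun q hq => div_nonneg (abs_nonneg _) (by linarith [hq.2])
  refine ⟨by linarith, ?_⟩
  calc |Fxi ξ₁ σD h₁ y - Fxi ξ₂ σD h₂ y|
      ≤ |ξ₁ - ξ₂| / σD ^ 2 + ξbar / σD ^ 2 * ∫ q in (0:ℝ)..y, |h₁ q - h₂ q| / (1 - q) :=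
        abs_Fxi_sub_Fxi_le hξ₂ hy hy1 (H₁.continuousOn.mono (Icc_subset_Icc_right hyβ₁))
          (H₂.continuousOn.mono (Icc_subset_Icc_right hyβ₂)) (H₁.le_one hγ.2 hyβ₁ hy₁)
          (H₂.le_one hγ.2 hyβ₂ hy₂)
    _ ≤ |ξ₁ - ξ₂| / σD ^ 2 + ξbar / σD ^ 2 * (M₁ * |ξ₁ - ξ₂|) := by
        gcongr
        linarith [abs_nonneg (h₁ y - h₂ y)]
    _ = (1 / σD ^ 2 + ξbar / σD ^ 2 * M₁) * |ξ₁ - ξ₂| := by ring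
end

section
/- Let γ ∈ (0,1), σ_D > 0, A > 1, and ξ > 0. Suppose h ∈ C([0,1]) ∩ C¹([0,1)) satisfies 0 ≤ h(y) ≤ 1 for all y ∈ [0,1], h(0) = γ, h(1) = 1, and h'(y) = a₀(y) + (a₁(y)/(1−y))·h(y) + (a₂(h,y)/(1−y))·h(y)² for all y ∈ (0,1). Then ∫₀¹ (1−h(q))/(1−q) dq ∈ (0,∞) and lim_{y↑1} exp(∫₀^y (h(q)−1)/(1−q) dq) = exp(−∫₀¹ (1−h(q))/(1−q) dq) = σ_D²(A−γ)/ξ, and this value lies in (0,1). -/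
open Set Real Filter Topology

/-!
With `F q = (1 - h q)/(1 - q) ≥ 0`, the primitive `∫₀^y F` is monotone, so either `F` is
integrable on `[0,1]` or the primitive tends to `+∞`. Multiplying the equation by `1 - y`,
`(1 - y) h'(y)` tends to `γ - A + (ξ/σ_D²) L`, where `L` is the limit of `exp (-∫₀^y F)`.
A nonzero limit `M` would give `h' ≥ (M/2)/(1 - y)` (or the reverse) near `1`, so `h` would
diverge like `log (1 - y)`, contradicting `0 ≤ h ≤ 1`. Hence `L = σ_D²(A - γ)/ξ > 0`, which rules
out the divergent case; and `F(0) = 1 - γ > 0` makes `∫₀¹ F` positive, so `L < 1`.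
-/

open MeasureTheory

theorem tendsto_log_sub_nhdsLT (b : ℝ) : Tendsto (fun y => log (b - y)) (𝓝[<] b) atBot := by
  refine tendsto_log_nhdsGT_zero.comp
    (tendsto_nhdsWithin_of_tendsto_nhds_of_eventually_within _ ?_ ?_)
  · exact ((continuous_sub_left b).tendsto' b 0 (sub_self b)).mono_left nhdsWithin_le_nhds
  · filter_upwards [self_mem_nhdsWithin] with y hy
    exact sub_pos.2 (mem_Iio.1 hy)

theorem tendsto_atTop_of_div_sub_le_deriv {g g' : ℝ → ℝ} {b M : ℝ} (hM : 0 < M)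
    (hg : ∀ᶠ y in 𝓝[<] b, HasDerivAt g (g' y) y ∧ M / (b - y) ≤ g' y) :
    Tendsto g (𝓝[<] b) atTop := by
  obtain ⟨l, hlb, hl⟩ := mem_nhdsLT_iff_exists_Ioo_subset.1 hg
  have hderiv : ∀ y ∈ Ioo l b,
      HasDerivAt (fun y => g y + M * log (b - y)) (g' y - M / (b - y)) y := by
    intro y hy
    have hlog := ((hasDerivAt_id y).const_sub b).log (sub_pos.2 hy.2).ne'
    exact ((hl hy).1.add (hlog.const_mul M)).congr_deriv (by simp only [id]; ring)
  have hmono : MonotoneOn (fun y => g y + M * log (b - y)) (Ioo l b) := by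
    refine monotoneOn_of_hasDerivWithinAt_nonneg (convex_Ioo l b)
      (f' := fun y => g' y - M / (b - y))
      (fun y hy => (hderiv y hy).continuousAt.continuousWithinAt) ?_ ?_ <;> rw [interior_Ioo]
    · exact fun y hy => (hderiv y hy).hasDerivWithinAt
    · exact fun y hy => sub_nonneg.2 (hl hy).2
  obtain ⟨y₀, hy₀⟩ := nonempty_Ioo.2 (mem_Iio.1 hlb)
  have hlower : ∀ᶠ y in 𝓝[<] b, g y₀ + M * log (b - y₀) + -M * log (b - y) ≤ g y := by
    filter_upwards [Ioo_mem_nhdsLT hy₀.2] with y hy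
    have := hmono hy₀ ⟨hy₀.1.trans hy.1, hy.2⟩ hy.1.le
    linarith
  refine tendsto_atTop_mono' _ hlower (tendsto_atTop_add_const_left _ _ ?_)
  exact (tendsto_log_sub_nhdsLT b).const_mul_atBot_of_neg (neg_neg_of_pos hM)

theorem nonpos_of_tendsto_sub_mul_deriv {g g' : ℝ → ℝ} {b M C : ℝ}
    (hd : ∀ᶠ y in 𝓝[<] b, HasDerivAt g (g' y) y) (hbdd : ∀ᶠ y in 𝓝[<] b, |g y| ≤ C)
    (hlim : Tendsto (fun y => (b - y) * g' y) (𝓝[<] b) (𝓝 M)) : M ≤ 0 := by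
  by_contra! hM
  have hdom : ∀ᶠ y in 𝓝[<] b, HasDerivAt g (g' y) y ∧ M / 2 / (b - y) ≤ g' y := by
    filter_upwards [hd, hlim.eventually (eventually_gt_nhds (half_lt_self hM)),
      self_mem_nhdsWithin] with y hy hlt hyb
    exact ⟨hy, (div_le_iff₀' (sub_pos.2 hyb)).2 hlt.le⟩
  obtain ⟨y, hy, hyC⟩ :=
    ((tendsto_atTop_of_div_sub_le_deriv (half_pos hM) hdom).eventually_gt_atTop C |>.and
      hbdd).exists
  linarith [le_abs_self (g y)]

theorem eq_zero_of_tendsto_sub_mul_deriv {g g' : ℝ → ℝ} {b M C : ℝ}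
    (hd : ∀ᶠ y in 𝓝[<] b, HasDerivAt g (g' y) y) (hbdd : ∀ᶠ y in 𝓝[<] b, |g y| ≤ C)
    (hlim : Tendsto (fun y => (b - y) * g' y) (𝓝[<] b) (𝓝 M)) : M = 0 := by
  refine le_antisymm (nonpos_of_tendsto_sub_mul_deriv hd hbdd hlim) (neg_nonpos.1 ?_)
  refine nonpos_of_tendsto_sub_mul_deriv (g := fun y => -g y) (g' := fun y => -g' y)
    (b := b) (C := C) ?_ ?_ ?_
  · filter_upwards [hd] with y hy using hy.neg
  · simpa only [abs_neg] using hbdd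
  · simpa only [mul_neg] using hlim.neg

theorem intervalIntegrable_or_tendsto_integral_atTop {f : ℝ → ℝ} {a b : ℝ} (hab : a < b)
    (hf : ContinuousOn f (Ico a b)) (hf0 : ∀ x ∈ Ico a b, 0 ≤ f x) :
    IntervalIntegrable f volume a b ∨ Tendsto (fun y => ∫ x in a..y, f x) (𝓝[<] b) atTop := by
  have hint : ∀ y ∈ Ico a b, IntervalIntegrable f volume a y := fun y hy =>
    (hf.mono (Icc_subset_Ico_right hy.2)).intervalIntegrable_of_Icc hy.1
  have hmono : MonotoneOn (fun y => ∫ x in a..y, f x) (Ico a b) := fun x hx y hy hxy =>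
    intervalIntegral.integral_mono_interval le_rfl hx.1 hxy
      (ae_restrict_of_forall_mem measurableSet_Ioc fun z hz => hf0 z ⟨hz.1.le, hz.2.trans_lt hy.2⟩)
      (hint y hy)
  by_cases hbdd : ∃ C, ∀ y ∈ Ico a b, ∫ x in a..y, f x ≤ C
  · obtain ⟨C, hC⟩ := hbdd
    obtain ⟨u, -, hu, hlim⟩ := exists_seq_strictMono_tendsto' hab
    have hu' : ∀ n, u n ∈ Ico a b := fun n => Ioo_subset_Ico_self (hu n)
    left
    rw [intervalIntegrable_iff_integrableOn_Ioc_of_le hab.le]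
    refine integrableOn_Ioc_of_intervalIntegral_norm_bounded_right (I := C)
      (fun n => (hint (u n) (hu' n)).1) hlim (Eventually.of_forall fun n => ?_)
    calc ∫ x in Ioc a (u n), ‖f x‖ = ∫ x in a..u n, f x := by
          rw [intervalIntegral.integral_of_le (hu' n).1]
          exact setIntegral_congr_fun measurableSet_Ioc fun x hx =>
            norm_of_nonneg (hf0 x ⟨hx.1.le, hx.2.trans_lt (hu' n).2⟩)
      _ ≤ C := hC _ (hu' n)
  · push Not at hbdd
    right
    refine tendsto_atTop.2 fun C => ?_
    obtain ⟨y, hy, hCy⟩ := hbdd C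
    filter_upwards [Ioo_mem_nhdsLT hy.2] with z hz
    exact hCy.le.trans (hmono hy ⟨hy.1.trans hz.1.le, hz.2⟩ hz.1.le)

theorem tendsto_intervalIntegral_nhdsLT {f : ℝ → ℝ} {a b : ℝ} (hab : a < b)
    (hf : IntervalIntegrable f volume a b) :
    Tendsto (fun y => ∫ x in a..y, f x) (𝓝[<] b) (𝓝 (∫ x in a..b, f x)) := by
  have hcont := intervalIntegral.continuousOn_primitive_interval' hf left_mem_uIcc b right_mem_uIcc
  rw [uIcc_of_le hab.le] at hcont
  rw [← nhdsWithin_Ico_eq_nhdsLT hab]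
  exact hcont.mono Ico_subset_Icc_self

theorem intervalIntegral_pos_of_nonneg_of_pos_left {f : ℝ → ℝ} {a b : ℝ} (hab : a < b)
    (hf : ContinuousOn f (Ico a b)) (hf0 : ∀ x ∈ Ico a b, 0 ≤ f x)
    (hfi : IntervalIntegrable f volume a b) (ha : 0 < f a) : 0 < ∫ x in a..b, f x := by
  have hpos : ∀ᶠ x in 𝓝[>] a, 0 < f x := by
    have := (hf a ⟨le_rfl, hab⟩).eventually (lt_mem_nhds ha)
    rw [nhdsWithin_Ico_eq_nhdsGE hab] at this
    exact this.filter_mono (nhdsWithin_mono _ Ioi_subset_Ici_self)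
  obtain ⟨δ, hδ, hδpos⟩ := mem_nhdsGT_iff_exists_Ioo_subset.1 (hpos.and (Ioo_mem_nhdsGT hab))
  have h₀ : 0 ≤ᵐ[volume.restrict (uIoc a b)] f := by
    rw [EventuallyLE, uIoc_of_le hab.le]
    exact ae_restrict_of_ae_eq_of_ae_restrict Ioo_ae_eq_Ioc
      (ae_restrict_of_forall_mem measurableSet_Ioo fun x hx => hf0 x (Ioo_subset_Ico_self hx))
  refine (intervalIntegral.integral_pos_iff_support_of_nonneg_ae' h₀ hfi).2 ⟨hab, ?_⟩
  calc 0 < volume (Ioo a δ) := by simpa using hδ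
    _ ≤ volume (Function.support f ∩ Ioc a b) := measure_mono fun x hx =>
      ⟨(hδpos hx).1.ne', Ioo_subset_Ioc_self (hδpos hx).2⟩

theorem tendsto_one_sub_mul_deriv_of_riccati {γ σD A ξ L : ℝ} {h h' : ℝ → ℝ}
    (hode : ∀ y ∈ Ioo (0:ℝ) 1,
      h' y = a0 γ y + a1 γ y / (1 - y) * h y + a2 ξ σD A h y / (1 - y) * h y ^ 2)
    (hh : Tendsto h (𝓝[<] 1) (𝓝 1))
    (hL : Tendsto (fun y => exp (∫ q in (0:ℝ)..y, (h q - 1) / (1 - q))) (𝓝[<] 1) (𝓝 L)) :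
    Tendsto (fun y => (1 - y) * h' y) (𝓝[<] 1) (𝓝 (γ - A + ξ / σD ^ 2 * L)) := by
  have ha0 : Tendsto (a0 γ) (𝓝[<] 1) (𝓝 (a0 γ 1)) :=
    (continuousAt_const.div continuousAt_id one_ne_zero).tendsto.mono_left nhdsWithin_le_nhds
  have ha1 : Tendsto (a1 γ) (𝓝[<] 1) (𝓝 (a1 γ 1)) :=
    ((continuousAt_const.mul continuousAt_id).sub continuousAt_const |>.div continuousAt_id
      one_ne_zero).tendsto.mono_left nhdsWithin_le_nhds
  have ha2 : Tendsto (a2 ξ σD A h) (𝓝[<] 1) (𝓝 (ξ / σD ^ 2 * L - A)) :=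
    (tendsto_const_nhds.mul hL).sub tendsto_const_nhds
  have hsub : Tendsto (fun y : ℝ => 1 - y) (𝓝[<] 1) (𝓝 (1 - 1)) :=
    (tendsto_const_nhds.sub tendsto_id).mono_left nhdsWithin_le_nhds
  have hlim := ((hsub.mul ha0).add (ha1.mul hh)).add (ha2.mul (hh.pow 2))
  refine Tendsto.congr' ?_ (by convert hlim using 2; simp only [a0, a1]; ring)
  filter_upwards [Ioo_mem_nhdsLT one_pos] with y hy
  have hy1 : 1 - y ≠ 0 := (sub_pos.2 hy.2).ne'
  rw [hode y hy]
  field_simp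

theorem riccati_limit_relation {γ σD A ξ L : ℝ} {h h' : ℝ → ℝ}
    (hc : ContinuousOn h (Icc (0:ℝ) 1))
    (hd : ∀ y ∈ Ico (0:ℝ) 1, HasDerivWithinAt h (h' y) (Ico (0:ℝ) 1) y)
    (hbd : ∀ y ∈ Icc (0:ℝ) 1, 0 ≤ h y ∧ h y ≤ 1) (h1 : h 1 = 1)
    (hode : ∀ y ∈ Ioo (0:ℝ) 1,
      h' y = a0 γ y + a1 γ y / (1 - y) * h y + a2 ξ σD A h y / (1 - y) * h y ^ 2)
    (hL : Tendsto (fun y => exp (∫ q in (0:ℝ)..y, (h q - 1) / (1 - q))) (𝓝[<] 1) (𝓝 L)) :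
    γ - A + ξ / σD ^ 2 * L = 0 := by
  have hh1 : Tendsto h (𝓝[<] 1) (𝓝 1) := by
    have := (continuousWithinAt_Ioo_iff_Iio one_pos).1
      ((hc 1 ⟨zero_le_one, le_rfl⟩).mono Ioo_subset_Icc_self)
    rwa [ContinuousWithinAt, h1] at this
  refine eq_zero_of_tendsto_sub_mul_deriv (g := h) (C := 1) ?_ ?_
    (tendsto_one_sub_mul_deriv_of_riccati hode hh1 hL)
  · filter_upwards [Ioo_mem_nhdsLT one_pos] with y hy
    exact (hd y (Ioo_subset_Ico_self hy)).hasDerivAt (Ico_mem_nhds hy.1 hy.2)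
  · filter_upwards [Ioo_mem_nhdsLT one_pos] with y hy
    obtain ⟨hy0, hy1⟩ := hbd y (Ioo_subset_Icc_self hy)
    exact abs_le.2 ⟨by linarith, hy1⟩

theorem stmt14_general (γ σD A ξ : ℝ) (hγ : γ ∈ Ioo (0:ℝ) 1) (hσ : 0 < σD)
    (hA : 1 < A) (hξ : 0 < ξ)
    (h h' : ℝ → ℝ)
    (hc : ContinuousOn h (Icc (0:ℝ) 1))
    (hd : ∀ y ∈ Ico (0:ℝ) 1, HasDerivWithinAt h (h' y) (Ico (0:ℝ) 1) y)
    (hbd : ∀ y ∈ Icc (0:ℝ) 1, 0 ≤ h y ∧ h y ≤ 1)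
    (h0 : h 0 = γ) (h1 : h 1 = 1)
    (hode : ∀ y ∈ Ioo (0:ℝ) 1,
      h' y = a0 γ y + a1 γ y / (1 - y) * h y + a2 ξ σD A h y / (1 - y) * h y ^ 2) :
    IntervalIntegrable (fun q => (1 - h q) / (1 - q)) MeasureTheory.volume 0 1 ∧
    (0 < ∫ q in (0:ℝ)..1, (1 - h q) / (1 - q)) ∧
    Tendsto (fun y => Real.exp (∫ q in (0:ℝ)..y, (h q - 1) / (1 - q)))
      (𝓝[<] (1:ℝ)) (𝓝 (σD ^ 2 * (A - γ) / ξ)) ∧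
    Real.exp (-∫ q in (0:ℝ)..1, (1 - h q) / (1 - q)) = σD ^ 2 * (A - γ) / ξ ∧
    σD ^ 2 * (A - γ) / ξ ∈ Ioo (0:ℝ) 1 := by
  obtain ⟨-, hγ1⟩ := hγ
  set F : ℝ → ℝ := fun q => (1 - h q) / (1 - q) with hF
  have hI : ∀ y, ∫ q in (0:ℝ)..y, (h q - 1) / (1 - q) = -∫ q in (0:ℝ)..y, F q := fun y => by
    rw [← intervalIntegral.integral_neg]
    congr 1 with q
    ring
  have hF0 : ∀ q ∈ Ico (0:ℝ) 1, 0 ≤ F q := fun q hq =>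
    div_nonneg (sub_nonneg.2 (hbd q (Ico_subset_Icc_self hq)).2) (sub_nonneg.2 hq.2.le)
  have hFc : ContinuousOn F (Ico 0 1) :=
    (continuousOn_const.sub (hc.mono Ico_subset_Icc_self)).div
      (continuousOn_const.sub continuousOn_id) fun q hq => (sub_pos.2 hq.2).ne'
  have hrel : ∀ L, Tendsto (fun y => exp (-∫ q in (0:ℝ)..y, F q)) (𝓝[<] 1) (𝓝 L) →
      γ - A + ξ / σD ^ 2 * L = 0 := fun L hL =>
    riccati_limit_relation hc hd hbd h1 hode (by simpa only [hI] using hL)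
  obtain hint | hinf := intervalIntegrable_or_tendsto_integral_atTop one_pos hFc hF0
  swap
  · have := hrel 0 (tendsto_exp_atBot.comp (tendsto_neg_atTop_atBot.comp hinf))
    linarith
  have hlim : Tendsto (fun y => exp (-∫ q in (0:ℝ)..y, F q)) (𝓝[<] 1)
      (𝓝 (exp (-∫ q in (0:ℝ)..1, F q))) :=
    (continuous_exp.tendsto _).comp (tendsto_intervalIntegral_nhdsLT one_pos hint).neg
  have hval : exp (-∫ q in (0:ℝ)..1, F q) = σD ^ 2 * (A - γ) / ξ := by
    have := hrel _ hlim
    field_simp at this ⊢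
    linarith
  have hpos : 0 < ∫ q in (0:ℝ)..1, F q :=
    intervalIntegral_pos_of_nonneg_of_pos_left one_pos hFc hF0 hint (by simp [hF, h0, hγ1])
  refine ⟨hint, hpos, by simpa only [hI, hval] using hlim, hval, ?_, ?_⟩
  · exact div_pos (mul_pos (pow_pos hσ 2) (by linarith)) hξ
  · rw [← hval]
    exact exp_lt_one_iff.2 (neg_neg_of_pos hpos)

/-- If `h ∈ C([0,1]) ∩ C¹([0,1))` with `0 ≤ h ≤ 1` solves the
path-dependent Riccati ODE with `h 0 = γ`, `h 1 = 1`, then the integral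
`∫₀¹ (1−h(q))/(1−q) dq` is finite and positive, and
`lim_{y↑1} exp(∫₀^y (h(q)−1)/(1−q) dq) = exp(−∫₀¹ (1−h(q))/(1−q) dq) = σ_D²(A−γ)/ξ ∈ (0,1)`. -/
theorem stmt14 (γ σD A ξ : ℝ) (hγ : γ ∈ Ioo (0:ℝ) 1) (hσ : 0 < σD)
    (hA : 1 < A) (hξ : 0 < ξ)
    (h h' : ℝ → ℝ)
    (hc : ContinuousOn h (Icc (0:ℝ) 1))
    (hc' : ContinuousOn h' (Ico (0:ℝ) 1))
    (hd : ∀ y ∈ Ico (0:ℝ) 1, HasDerivWithinAt h (h' y) (Ico (0:ℝ) 1) y)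
    (hbd : ∀ y ∈ Icc (0:ℝ) 1, 0 ≤ h y ∧ h y ≤ 1)
    (h0 : h 0 = γ) (h1 : h 1 = 1)
    (hode : ∀ y ∈ Ioo (0:ℝ) 1,
      h' y = a0 γ y + a1 γ y / (1 - y) * h y + a2 ξ σD A h y / (1 - y) * h y ^ 2) :
    IntervalIntegrable (fun q => (1 - h q) / (1 - q)) MeasureTheory.volume 0 1 ∧
    (0 < ∫ q in (0:ℝ)..1, (1 - h q) / (1 - q)) ∧
    Tendsto (fun y => Real.exp (∫ q in (0:ℝ)..y, (h q - 1) / (1 - q)))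
      (𝓝[<] (1:ℝ)) (𝓝 (σD ^ 2 * (A - γ) / ξ)) ∧
    Real.exp (-∫ q in (0:ℝ)..1, (1 - h q) / (1 - q)) = σD ^ 2 * (A - γ) / ξ ∧
    σD ^ 2 * (A - γ) / ξ ∈ Ioo (0:ℝ) 1 :=
  stmt14_general γ σD A ξ hγ hσ hA hξ h h' hc hd hbd h0 h1 hode
end
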